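/- arXiv:math-ph/0004020 — 3 statements merged into one kernel-verified Lean document; each statement's English description precedes it below -/
import Mathlib

section
/- For every 2-vector field ζ = Σ_{μ₁<…<μₙ} Σ_α ζ^{μ_α}_{μ₁…μₙ}(q) ∂/∂p_{μ₁…μₙ} ∧ ∂/∂q^{μ_α} (with coefficients depending only on q), the generalized position form Q^ζ := ζ ⨼ Ω belongs to 𝔓^{n−1}M with Ξ(Q^ζ) = − Σ_{μ₁<…<μₙ} Σ_α Σ_ν (∂ζ^ν_{μ₁…μ_{α−1} ν μ_{α+1}…μₙ}/∂q^{μ_α}) ∂/∂p_{μ₁…μₙ}. For every vector field ξ = Σ_μ ξ^μ(q) ∂/∂q^μ (with coefficients depending only on q), the generalized momentum form P_ξ := ξ ⨼ θ belongs to 𝔓^{n−1}M with Ξ(P_ξ) = ξ − Σ_μ Σ_ν (∂ξ^μ/∂q^ν) Π^ν_μ, where Π^ν_μ := Σ_{μ₁<…<μₙ} Σ_α p_{μ₁…μ_{α−1} μ μ_{α+1}…μₙ} δ^ν_{μ_α} ∂/∂p_{μ₁…μₙ}, a vector field satisfying dq^ν ∧ (∂/∂q^μ ⨼ θ) = Π^ν_μ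 ⨼ Ω. -/
open scoped BigOperators

noncomputable section

/-- Increasing multi-indices `μ₁ < … < μₙ` in `{1,…,N}`, encoded as `n`-element subsets. -/
abbrev MultiIdx (N n : ℕ) : Type := {s : Finset (Fin N) // s.card = n}

/-- `μ_a` : the `a`-th element (in increasing order) of the multi-index `s`. -/
def midx {N n : ℕ} (s : MultiIdx N n) (a : Fin n) : Fin N :=
  ((s.1.orderIsoOfFin s.2) a : Fin N)

/-- The multimomentum phase space `M = ℝ^{n+k} × Λⁿ(ℝ^{n+k})*`, with coordinates
`(q^μ, p_{μ₁…μₙ})`. -/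
abbrev Phase (n k : ℕ) : Type := (Fin (n + k) → ℝ) × (MultiIdx (n + k) n → ℝ)

/-- Evaluation of the Cartan–Poincaré form `θ = Σ_{μ₁<…<μₙ} p_{μ₁…μₙ} dq^{μ₁}∧…∧dq^{μₙ}`
on an `n`-tuple of tangent vectors of `M`. -/
def thetaEval (n k : ℕ) (m : Phase n k) (w : Fin n → Phase n k) : ℝ :=
  ∑ s : MultiIdx (n + k) n,
    m.2 s * Matrix.det (Matrix.of fun a b : Fin n => (w b).1 (midx s a))

/-- Evaluation of the pataplectic form
`Ω = dθ = Σ_{μ₁<…<μₙ} dp_{μ₁…μₙ} ∧ dq^{μ₁}∧…∧dq^{μₙ}` on an `(n+1)`-tuple of tangent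
vectors of `M` (each summand is the determinant of the matrix of the coordinates
`(p_{μ₁…μₙ}, q^{μ₁}, …, q^{μₙ})` of the `n+1` vectors). -/
def OmegaEval (n k : ℕ) (w : Fin (n + 1) → Phase n k) : ℝ :=
  ∑ s : MultiIdx (n + k) n,
    Matrix.det (Matrix.of fun a b : Fin (n + 1) =>
      (Fin.cons ((w b).2 s) (fun j : Fin n => (w b).1 (midx s j)) : Fin (n+1) → ℝ) a)

/-- Evaluation of the volume form `ω = dx¹ ∧ … ∧ dxⁿ` on tangent vectors of `M`. -/
def volEval (n k : ℕ) (w : Fin n → Phase n k) : ℝ :=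
  Matrix.det (Matrix.of fun a b : Fin n => (w b).1 (Fin.castAdd k a))

/-- Evaluation formula for the exterior differential of a `p`-form `φ` (given by its
evaluation function):
`dφ(x)(w₀,…,w_p) = Σ_i (−1)^i (∂_{w_i} φ)(x)(w₀,…,ŵ_i,…,w_p)`. -/
def dEval {E : Type*} [NormedAddCommGroup E] [NormedSpace ℝ E] {p : ℕ}
    (φ : E → (Fin p → E) → ℝ) (m : E) (w : Fin (p + 1) → E) : ℝ :=
  ∑ i : Fin (p + 1), (-1 : ℝ) ^ (i : ℕ) *
    fderiv ℝ (fun m' => φ m' (w ∘ i.succAbove)) m (w i)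

/-- The image of an injective tuple of indices, as a multi-index. -/
def tupCard {N n : ℕ} (t : Fin n → Fin N) (h : Function.Injective t) :
    (Finset.univ.image t).card = n := by
  rw [Finset.card_image_of_injective _ h]
  simp

/-- The permutation sorting an injective tuple `t` increasingly:
`t a = μ_{σ(a)}` where `μ₁ < … < μₙ` is the increasing rearrangement of `t`. -/
def sortPerm {N n : ℕ} (t : Fin n → Fin N) (h : Function.Injective t) :
    Equiv.Perm (Fin n) :=
  Equiv.ofBijective
    (fun a => (Finset.orderIsoOfFin _ (tupCard t h)).symm
      ⟨t a, Finset.mem_image_of_mem t (Finset.mem_univ a)⟩)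
    (Finite.injective_iff_bijective.mp (by
      intro a b hab
      apply h
      have h2 := congrArg
        (fun z => ((Finset.orderIsoOfFin _ (tupCard t h)) z : Fin N)) hab
      simpa using h2))

/-- The completely antisymmetric extension `p_{μ₁…μₙ}` of the coordinates `p_s` to
arbitrary (not necessarily increasing) tuples of indices. -/
def pext {N n : ℕ} (p : MultiIdx N n → ℝ) (t : Fin n → Fin N) : ℝ :=
  if h : Function.Injective t then
    ((Equiv.Perm.sign (sortPerm t h) : ℤ) : ℝ) * p ⟨Finset.univ.image t, tupCard t h⟩
  else 0

/-- The antisymmetric extension `ζ^{t(α)}_{t}` of a family of coefficients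
`ζ^{μ_α}_{μ₁…μₙ}(q)` given on increasing multi-indices (the position `α` marks the
superscript entry `t α` of the tuple `t`). -/
def extC {N n : ℕ} (c : MultiIdx N n → Fin n → (Fin N → ℝ) → ℝ)
    (t : Fin n → Fin N) (α : Fin n) (q : Fin N → ℝ) : ℝ :=
  if h : Function.Injective t then
    ((Equiv.Perm.sign (sortPerm t h) : ℤ) : ℝ) *
      c ⟨Finset.univ.image t, tupCard t h⟩ (sortPerm t h α) q
  else 0

/-- The coordinate vector `∂/∂q^μ`. -/
def eQ (n k : ℕ) (μ : Fin (n + k)) : Phase n k := (Pi.single μ 1, 0)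

/-- The coordinate vector `∂/∂p_{μ₁…μₙ}`. -/
def eP (n k : ℕ) (s : MultiIdx (n + k) n) : Phase n k := (0, Pi.single s 1)

/-- The vector field `ξ = Σ_μ ξ^μ(q) ∂/∂q^μ` on `M` with components depending on `q` only. -/
def qVF (n k : ℕ) (ξf : Fin (n + k) → (Fin (n + k) → ℝ) → ℝ) (m : Phase n k) : Phase n k :=
  (fun μ => ξf μ m.1, 0)

/-- The vector field
`Π^ν_μ = Σ_{μ₁<…<μₙ} Σ_α p_{μ₁…μ_{α−1} μ μ_{α+1}…μₙ} δ^ν_{μ_α} ∂/∂p_{μ₁…μₙ}`. -/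
def PiVF (n k : ℕ) (ν μ : Fin (n + k)) (m : Phase n k) : Phase n k :=
  (0, fun s => ∑ α : Fin n,
    if midx s α = ν then pext m.2 (Function.update (fun a => midx s a) α μ) else 0)

/-- The generalized position form `Q^ζ = ζ ⨼ Ω` of the 2-vector field
`ζ = Σ_{μ₁<…<μₙ} Σ_α ζ^{μ_α}_{μ₁…μₙ}(q) ∂/∂p_{μ₁…μₙ} ∧ ∂/∂q^{μ_α}`. -/
def Qzeta (d k : ℕ)
    (c : MultiIdx (d + 1 + k) (d + 1) → Fin (d + 1) → (Fin (d + 1 + k) → ℝ) → ℝ)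
    (m : Phase (d + 1) k) (v : Fin d → Phase (d + 1) k) : ℝ :=
  ∑ s : MultiIdx (d + 1 + k) (d + 1), ∑ α : Fin (d + 1),
    c s α m.1 *
      OmegaEval (d + 1) k (Fin.cons (eP (d + 1) k s) (Fin.cons (eQ (d + 1) k (midx s α)) v))

/-- The vector field
`Ξ(Q^ζ) = −Σ_{μ₁<…<μₙ} Σ_α Σ_ν (∂ζ^ν_{μ₁…μ_{α−1} ν μ_{α+1}…μₙ}/∂q^{μ_α}) ∂/∂p_{μ₁…μₙ}`. -/
def XiQ (d k : ℕ)
    (c : MultiIdx (d + 1 + k) (d + 1) → Fin (d + 1) → (Fin (d + 1 + k) → ℝ) → ℝ)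
    (m : Phase (d + 1) k) : Phase (d + 1) k :=
  (0, fun s => - ∑ α : Fin (d + 1), ∑ ν : Fin (d + 1 + k),
    fderiv ℝ (extC c (Function.update (fun a => midx s a) α ν) α) m.1
      (Pi.single (midx s α) 1))

/-- The generalized momentum form `P_ξ = ξ ⨼ θ`. -/
def Pxi (d k : ℕ) (ξf : Fin (d + 1 + k) → (Fin (d + 1 + k) → ℝ) → ℝ)
    (m : Phase (d + 1) k) (v : Fin d → Phase (d + 1) k) : ℝ :=
  thetaEval (d + 1) k m (Fin.cons (qVF (d + 1) k ξf m) v)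

/-- The vector field `Ξ(P_ξ) = ξ − Σ_μ Σ_ν (∂ξ^μ/∂q^ν) Π^ν_μ`. -/
def XiP (d k : ℕ) (ξf : Fin (d + 1 + k) → (Fin (d + 1 + k) → ℝ) → ℝ)
    (m : Phase (d + 1) k) : Phase (d + 1) k :=
  qVF (d + 1) k ξf m
    - ∑ μ : Fin (d + 1 + k), ∑ ν : Fin (d + 1 + k),
        (fderiv ℝ (ξf μ) m.1 (Pi.single ν 1)) • PiVF (d + 1) k ν μ m

section Aux
open Finset Equiv Matrix

variable {N n : ℕ}

lemma midx_injective (s : MultiIdx N n) : Function.Injective (midx s) := by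
  intro a b h
  have := (s.1.orderIsoOfFin s.2).injective (Subtype.coe_injective h)
  exact this

lemma image_midx (s : MultiIdx N n) : Finset.univ.image (midx s) = s.1 := by
  ext x
  simp only [Finset.mem_image, Finset.mem_univ, true_and]
  constructor
  · rintro ⟨a, rfl⟩; exact ((s.1.orderIsoOfFin s.2) a).2
  · intro hx
    exact ⟨(s.1.orderIsoOfFin s.2).symm ⟨x, hx⟩, by simp [midx]⟩

lemma sortPerm_spec {t : Fin n → Fin N} (h : Function.Injective t) (a : Fin n) :
    midx ⟨Finset.univ.image t, tupCard t h⟩ (sortPerm t h a) = t a := by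
  simp [sortPerm, midx, Equiv.ofBijective]

lemma multiIdx_eq_of_image {t : Fin n → Fin N} (h : Function.Injective t) (s : MultiIdx N n)
    (him : Finset.univ.image t = s.1) :
    (⟨Finset.univ.image t, tupCard t h⟩ : MultiIdx N n) = s := Subtype.ext him

lemma image_comp_perm (t : Fin n → Fin N) (σ : Equiv.Perm (Fin n)) :
    Finset.univ.image (t ∘ σ) = Finset.univ.image t := by
  rw [← Finset.image_image]
  congr 1
  exact Finset.image_univ_equiv σ

lemma sortPerm_midx {s : MultiIdx N n} (h : Function.Injective (midx s)) (a : Fin n) :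
    sortPerm (midx s) h a = a := by
  apply midx_injective s
  have h1 := sortPerm_spec h a
  rwa [multiIdx_eq_of_image h s (image_midx s)] at h1

lemma injective_comp_perm_iff (t : Fin n → Fin N) (σ : Equiv.Perm (Fin n)) :
    Function.Injective (t ∘ σ) ↔ Function.Injective t := by
  constructor
  · intro h
    have : t = (t ∘ σ) ∘ σ.symm := by funext a; simp
    rw [this]; exact h.comp σ.symm.injective
  · intro h; exact h.comp σ.injective

lemma sortPerm_comp {t : Fin n → Fin N} (h : Function.Injective t)
    (σ : Equiv.Perm (Fin n)) (h' : Function.Injective (t ∘ σ)) (a : Fin n) :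
    sortPerm (t ∘ σ) h' a = sortPerm t h (σ a) := by
  have he : (⟨Finset.univ.image (t ∘ σ), tupCard _ h'⟩ : MultiIdx N n)
      = ⟨Finset.univ.image t, tupCard t h⟩ := Subtype.ext (image_comp_perm t σ)
  apply midx_injective (⟨Finset.univ.image t, tupCard t h⟩ : MultiIdx N n)
  have h1 := sortPerm_spec h' a
  rw [he] at h1
  rw [h1, sortPerm_spec h (σ a)]
  rfl

end Aux

section Aux2
open Finset Equiv Matrix

variable {N n : ℕ}

lemma pext_midx (p : MultiIdx N n → ℝ) (s : MultiIdx N n) : pext p (midx s) = p s := by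
  have h : Function.Injective (midx s) := midx_injective s
  rw [pext, dif_pos h]
  have hs : (⟨Finset.univ.image (midx s), tupCard _ h⟩ : MultiIdx N n) = s :=
    multiIdx_eq_of_image h s (image_midx s)
  have hσ : sortPerm (midx s) h = 1 := by
    ext a
    exact congrArg Fin.val (sortPerm_midx h a)
  rw [hσ, hs]
  simp

lemma extC_midx (c : MultiIdx N n → Fin n → (Fin N → ℝ) → ℝ) (s : MultiIdx N n) (α : Fin n) :
    extC c (midx s) α = c s α := by
  funext q
  have h : Function.Injective (midx s) := midx_injective s
  rw [extC, dif_pos h]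
  have hs : (⟨Finset.univ.image (midx s), tupCard _ h⟩ : MultiIdx N n) = s :=
    multiIdx_eq_of_image h s (image_midx s)
  have hσ : sortPerm (midx s) h = 1 := by
    ext a
    exact congrArg Fin.val (sortPerm_midx h a)
  rw [hσ, hs]
  simp

lemma sign_sortPerm_comp {t : Fin n → Fin N} (h : Function.Injective t)
    (σ : Equiv.Perm (Fin n)) (h' : Function.Injective (t ∘ σ)) :
    (Equiv.Perm.sign (sortPerm (t ∘ σ) h') : ℤ)
      = (Equiv.Perm.sign σ : ℤ) * (Equiv.Perm.sign (sortPerm t h) : ℤ) := by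
  have : sortPerm (t ∘ σ) h' = σ.trans (sortPerm t h) := by
    ext a
    rw [Equiv.trans_apply]
    exact congrArg Fin.val (sortPerm_comp h σ h' a)
  rw [this]
  have : Equiv.Perm.sign (σ.trans (sortPerm t h))
      = Equiv.Perm.sign (sortPerm t h) * Equiv.Perm.sign σ := by
    rw [← Equiv.Perm.sign_mul]; rfl
  rw [this]
  push_cast
  ring

lemma pext_comp (p : MultiIdx N n → ℝ) (t : Fin n → Fin N) (σ : Equiv.Perm (Fin n)) :
    pext p (t ∘ σ) = ((Equiv.Perm.sign σ : ℤ) : ℝ) * pext p t := by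
  by_cases h : Function.Injective t
  · have h' : Function.Injective (t ∘ σ) := (injective_comp_perm_iff t σ).2 h
    rw [pext, pext, dif_pos h, dif_pos h']
    have he : (⟨Finset.univ.image (t ∘ σ), tupCard _ h'⟩ : MultiIdx N n)
        = ⟨Finset.univ.image t, tupCard t h⟩ := Subtype.ext (image_comp_perm t σ)
    rw [he, sign_sortPerm_comp h σ h']
    push_cast
    ring
  · have h' : ¬ Function.Injective (t ∘ σ) := fun hh => h ((injective_comp_perm_iff t σ).1 hh)
    rw [pext, pext, dif_neg h, dif_neg h', mul_zero]

lemma extC_comp (c : MultiIdx N n → Fin n → (Fin N → ℝ) → ℝ) (t : Fin n → Fin N)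
    (σ : Equiv.Perm (Fin n)) (α : Fin n) :
    extC c (t ∘ σ) α = fun q => ((Equiv.Perm.sign σ : ℤ) : ℝ) * extC c t (σ α) q := by
  funext q
  by_cases h : Function.Injective t
  · have h' : Function.Injective (t ∘ σ) := (injective_comp_perm_iff t σ).2 h
    rw [extC, extC, dif_pos h, dif_pos h']
    have he : (⟨Finset.univ.image (t ∘ σ), tupCard _ h'⟩ : MultiIdx N n)
        = ⟨Finset.univ.image t, tupCard t h⟩ := Subtype.ext (image_comp_perm t σ)
    rw [he, sign_sortPerm_comp h σ h']
    have : sortPerm (t ∘ σ) h' α = sortPerm t h (σ α) := sortPerm_comp h σ h' α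
    rw [this]
    push_cast
    ring
  · have h' : ¬ Function.Injective (t ∘ σ) := fun hh => h ((injective_comp_perm_iff t σ).1 hh)
    rw [extC, extC, dif_neg h, dif_neg h', mul_zero]

/-- determinant of the matrix with rows `t a` (coordinates) and columns given by `g`. -/
def rDet {N n : ℕ} (t : Fin n → Fin N) (g : Fin n → Fin N → ℝ) : ℝ :=
  Matrix.det (Matrix.of fun a b => g b (t a))

lemma rDet_comp (t : Fin n → Fin N) (σ : Equiv.Perm (Fin n)) (g : Fin n → Fin N → ℝ) :
    rDet (t ∘ σ) g = ((Equiv.Perm.sign σ : ℤ) : ℝ) * rDet t g := by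
  have := Matrix.det_permute σ (Matrix.of fun a b => g b (t a))
  simpa [rDet, Matrix.submatrix] using this

lemma rDet_zero_of_not_injective {t : Fin n → Fin N} (h : ¬ Function.Injective t)
    (g : Fin n → Fin N → ℝ) : rDet t g = 0 := by
  rw [Function.not_injective_iff] at h
  obtain ⟨a, b, hab, hne⟩ := h
  exact Matrix.det_zero_of_row_eq hne (by funext c; simp [Matrix.of_apply, hab])

end Aux2

section Aux3
open Finset Equiv Matrix

variable {N n : ℕ}

/-- Symmetrization: a sum over all tuples equals `n!` times the sum over increasing tuples,
provided the summand vanishes on non-injective tuples and is invariant under permutations. -/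
lemma sum_tuples_eq (F : (Fin n → Fin N) → ℝ)
    (h0 : ∀ t, ¬ Function.Injective t → F t = 0)
    (h1 : ∀ (s : MultiIdx N n) (σ : Equiv.Perm (Fin n)), F (midx s ∘ σ) = F (midx s)) :
    ∑ t : Fin n → Fin N, F t = (n.factorial : ℝ) * ∑ s : MultiIdx N n, F (midx s) := by
  classical
  have step1 : ∑ t : Fin n → Fin N, F t
      = ∑ t ∈ Finset.univ.filter (fun t : Fin n → Fin N => Function.Injective t), F t := by
    rw [Finset.sum_filter]
    apply Finset.sum_congr rfl
    intro t _
    by_cases h : Function.Injective t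
    · rw [if_pos h]
    · rw [if_neg h, h0 t h]
  rw [step1]
  have step2 : ∑ t ∈ Finset.univ.filter (fun t : Fin n → Fin N => Function.Injective t), F t
      = ∑ p : MultiIdx N n × Equiv.Perm (Fin n), F (midx p.1 ∘ p.2) := by
    refine Finset.sum_bij'
      (fun t ht => (⟨Finset.univ.image t, tupCard t (by simpa using (Finset.mem_filter.1 ht).2)⟩,
        sortPerm t (by simpa using (Finset.mem_filter.1 ht).2)))
      (fun p _ => midx p.1 ∘ p.2) (fun t ht => Finset.mem_univ _) ?_ ?_ ?_ ?_
    · intro p _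
      simp only [Finset.mem_filter, Finset.mem_univ, true_and]
      exact (midx_injective p.1).comp p.2.injective
    · intro t ht
      funext a
      exact sortPerm_spec (by simpa using (Finset.mem_filter.1 ht).2) a
    · intro p hp
      have hinj : Function.Injective (midx p.1 ∘ p.2) := (midx_injective p.1).comp p.2.injective
      have h2 : ∀ (h : Function.Injective (midx p.1 ∘ ⇑p.2)),
          (⟨Finset.univ.image (midx p.1 ∘ ⇑p.2), tupCard _ h⟩ : MultiIdx N n) = p.1 :=
        fun h => multiIdx_eq_of_image h p.1 (by rw [image_comp_perm]; exact image_midx p.1)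
      refine Prod.ext (h2 hinj) ?_
      ext a
      have h' := sortPerm_comp (midx_injective p.1) p.2 hinj a
      have hh := sortPerm_midx (midx_injective p.1) (p.2 a)
      simp only
      rw [show (sortPerm (midx p.1 ∘ ⇑p.2) hinj) a = p.2 a from h'.trans hh]
    · intro t ht
      have hinj : Function.Injective t := by simpa using (Finset.mem_filter.1 ht).2
      exact (congrArg F (funext fun a => sortPerm_spec hinj a)).symm
  rw [step2, Fintype.sum_prod_type]
  rw [Finset.mul_sum]
  apply Finset.sum_congr rfl
  intro s _
  rw [Finset.sum_congr rfl (fun σ _ => h1 s σ)]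
  rw [Finset.sum_const]
  simp [Fintype.card_perm, mul_comm]

/-- Reindexing sum over (tuple, index) pairs by updating position `α`. -/
lemma sum_update_pair (α : Fin n) (K : (Fin n → Fin N) → Fin N → (Fin n → Fin N) → ℝ) :
    ∑ t : Fin n → Fin N, ∑ ν : Fin N, K t ν (Function.update t α ν)
      = ∑ t : Fin n → Fin N, ∑ ν : Fin N, K (Function.update t α ν) (t α) t := by
  classical
  rw [← Finset.sum_product', ← Finset.sum_product']
  refine Finset.sum_nbij' (fun p => (Function.update p.1 α p.2, p.1 α))
    (fun p => (Function.update p.1 α p.2, p.1 α))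
    (fun p hp => by simp) (fun p hp => by simp) ?_ ?_ ?_
  · intro p _
    show (Function.update (Function.update p.1 α p.2) α (p.1 α), Function.update p.1 α p.2 α) = p
    simp [Function.update_idem, Function.update_eq_self]
  · intro p _
    show (Function.update (Function.update p.1 α p.2) α (p.1 α), Function.update p.1 α p.2 α) = p
    simp [Function.update_idem, Function.update_eq_self]
  · intro p _
    show K p.1 p.2 (Function.update p.1 α p.2)
      = K (Function.update (Function.update p.1 α p.2) α (p.1 α))
          (Function.update p.1 α p.2 α) (Function.update p.1 α p.2)
    rw [Function.update_idem, Function.update_eq_self, Function.update_self]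

/-- Reindexing a constrained sum by swapping values at position `α`. -/
lemma sum_update_swap (α : Fin n) (μ ν : Fin N) (K : (Fin n → Fin N) → (Fin n → Fin N) → ℝ) :
    ∑ t : Fin n → Fin N, (if t α = μ then K t (Function.update t α ν) else 0)
      = ∑ t : Fin n → Fin N, (if t α = ν then K (Function.update t α μ) t else 0) := by
  classical
  rw [← Finset.sum_filter, ← Finset.sum_filter]
  refine Finset.sum_nbij' (fun t => Function.update t α ν)
    (fun t => Function.update t α μ) ?_ ?_ ?_ ?_ ?_
  · intro t ht; simp [Function.update_self]
  · intro t ht; simp [Function.update_self]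
  · intro t ht
    simp only [Finset.mem_filter, Finset.mem_univ, true_and] at ht
    show Function.update (Function.update t α ν) α μ = t
    rw [Function.update_idem, ← ht, Function.update_eq_self]
  · intro t ht
    simp only [Finset.mem_filter, Finset.mem_univ, true_and] at ht
    show Function.update (Function.update t α μ) α ν = t
    rw [Function.update_idem, ← ht, Function.update_eq_self]
  · intro t ht
    simp only [Finset.mem_filter, Finset.mem_univ, true_and] at ht
    show K t (Function.update t α ν) = K (Function.update (Function.update t α ν) α μ) (Function.update t α ν)
    congr 1
    rw [Function.update_idem, ← ht, Function.update_eq_self]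

end Aux3

section Aux4
open Finset Equiv Matrix

variable {N : ℕ}

lemma cons_comp_succAbove {β : Type*} {m : ℕ} (x0 : β) (w : Fin (m+1) → β) (i : Fin (m+1)) :
    (Fin.cons x0 w : Fin (m+2) → β) ∘ (i.succ).succAbove = Fin.cons x0 (w ∘ i.succAbove) := by
  funext b
  cases b using Fin.cases with
  | zero => simp [Fin.succ_succAbove_zero]
  | succ j => simp [Fin.succ_succAbove_succ]

lemma cons_cycleRange {m : ℕ} (t : Fin (m+1) → Fin N) (α : Fin (m+1)) (ν : Fin N) (b : Fin (m+1)) :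
    (Fin.cons ν (fun j : Fin m => t (α.succAbove j)) : Fin (m+1) → Fin N) (α.cycleRange b)
      = Function.update t α ν b := by
  rcases lt_trichotomy b α with h | h | h
  · rw [Fin.cycleRange_of_lt h]
    have hb : (b : ℕ) < m := by
      have h1 : (b : ℕ) < (α : ℕ) := h
      have h2 : (α : ℕ) < m + 1 := α.isLt
      omega
    have hsucc : b + 1 = Fin.succ ⟨(b : ℕ), hb⟩ := by
      apply Fin.ext
      rw [Fin.val_add_one_of_lt]
      · rfl
      · exact Fin.lt_iff_val_lt_val.2 (by simp [Fin.last]; omega)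
    rw [hsucc, Fin.cons_succ, Function.update_of_ne (ne_of_lt h)]
    congr 1
    rw [Fin.succAbove_of_castSucc_lt]
    · apply Fin.ext; rfl
    · exact Fin.lt_iff_val_lt_val.2 (by simpa using h)
  · subst h
    rw [Fin.cycleRange_self, Fin.cons_zero, Function.update_self]
  · rw [Fin.cycleRange_of_gt h]
    have hb1 : 1 ≤ (b : ℕ) := by
      have : (α : ℕ) < (b : ℕ) := h
      omega
    have hb : (b : ℕ) - 1 < m := by have := b.isLt; omega
    have hsucc : b = Fin.succ ⟨(b : ℕ) - 1, hb⟩ := by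
      apply Fin.ext
      simp [Fin.val_succ]
      omega
    have hle : α ≤ Fin.castSucc ⟨(b : ℕ) - 1, hb⟩ := by
      apply Fin.le_iff_val_le_val.2
      have : (α : ℕ) < (b : ℕ) := h
      simp only [Fin.coe_castSucc]
      omega
    rw [hsucc, Fin.cons_succ, Function.update_of_ne (by rw [← hsucc]; exact ne_of_gt h)]
    rw [Fin.succAbove_of_le_castSucc _ _ hle, ← hsucc]

lemma rDet_update {m : ℕ} (t : Fin (m+1) → Fin N) (α : Fin (m+1)) (ν : Fin N)
    (g : Fin (m+1) → Fin N → ℝ) :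
    rDet (Function.update t α ν) g
      = (-1 : ℝ)^(α : ℕ) * rDet (Fin.cons ν (t ∘ α.succAbove)) g := by
  have h := Matrix.det_permute α.cycleRange
    (Matrix.of fun (a : Fin (m+1)) (b : Fin (m+1)) =>
      g b ((Fin.cons ν (fun j : Fin m => t (α.succAbove j)) : Fin (m+1) → Fin N) a))
  have hm : ((Matrix.of fun (a : Fin (m+1)) (b : Fin (m+1)) =>
      g b ((Fin.cons ν (fun j : Fin m => t (α.succAbove j)) : Fin (m+1) → Fin N) a)).submatrix
      (⇑α.cycleRange) id)
      = Matrix.of fun a b => g b (Function.update t α ν a) := by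
    ext a b
    simp only [Matrix.submatrix_apply, Matrix.of_apply, id_eq]
    rw [cons_cycleRange]
  rw [hm] at h
  have hcons : (Fin.cons ν (t ∘ α.succAbove) : Fin (m+1) → Fin N)
      = (Fin.cons ν (fun j : Fin m => t (α.succAbove j)) : Fin (m+1) → Fin N) := rfl
  rw [rDet, rDet, hcons, h, Fin.sign_cycleRange]
  norm_num

lemma star_identity {m : ℕ} (t : Fin (m+1) → Fin N) (ν μ : Fin N)
    (x : Fin (m+1) → Fin N → ℝ) :
    ∑ i : Fin (m+1), (-1:ℝ)^(i:ℕ) * x i ν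
        * rDet t (Fin.cons (Pi.single μ 1) (x ∘ i.succAbove))
      = ∑ α : Fin (m+1), if t α = μ then rDet (Function.update t α ν) x else 0 := by
  classical
  set M : Matrix (Fin (m+2)) (Fin (m+2)) ℝ :=
    Matrix.of fun r b => (Fin.cons (Pi.single μ 1) x : Fin (m+2) → Fin N → ℝ) b
      ((Fin.cons ν t : Fin (m+2) → Fin N) r) with hM
  have hrow := Matrix.det_succ_row_zero M
  have hcol := Matrix.det_succ_column_zero M
  have e1 : M.submatrix Fin.succ ((0 : Fin (m+2)).succAbove) = Matrix.of fun a b => x b (t a) := by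
    ext a b
    simp [hM, Fin.succAbove_zero]
  have e1' : M.submatrix ((0 : Fin (m+2)).succAbove) Fin.succ = Matrix.of fun a b => x b (t a) := by
    ext a b
    simp [hM, Fin.succAbove_zero]
  have e2 : ∀ i : Fin (m+1), M.submatrix Fin.succ ((i.succ).succAbove)
      = Matrix.of fun a b => (Fin.cons (Pi.single μ 1) (x ∘ i.succAbove) : Fin (m+1) → Fin N → ℝ) b (t a) := by
    intro i
    ext a b
    simp only [Matrix.submatrix_apply, hM, Matrix.of_apply, Fin.cons_succ]
    rw [show (Fin.cons (Pi.single μ 1) x : Fin (m+2) → Fin N → ℝ) ((i.succ).succAbove b)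
        = (Fin.cons (Pi.single μ 1) (x ∘ i.succAbove) : Fin (m+1) → Fin N → ℝ) b
        from congrFun (cons_comp_succAbove _ x i) b]
  have e3 : ∀ α : Fin (m+1), M.submatrix ((α.succ).succAbove) Fin.succ
      = Matrix.of fun a b => x b ((Fin.cons ν (t ∘ α.succAbove) : Fin (m+1) → Fin N) a) := by
    intro α
    ext a b
    simp only [Matrix.submatrix_apply, hM, Matrix.of_apply, Fin.cons_succ]
    rw [show (Fin.cons ν t : Fin (m+2) → Fin N) ((α.succ).succAbove a)
        = (Fin.cons ν (t ∘ α.succAbove) : Fin (m+1) → Fin N) a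
        from congrFun (cons_comp_succAbove ν t α) a]
  rw [Fin.sum_univ_succ] at hrow hcol
  have hrow' : M.det = M 0 0 * rDet t x
      + ∑ i : Fin (m+1), -((-1:ℝ)^(i:ℕ) * x i ν
          * rDet t (Fin.cons (Pi.single μ 1) (x ∘ i.succAbove))) := by
    rw [hrow, e1]
    congr 1
    · simp [rDet]
    · apply Finset.sum_congr rfl
      intro i _
      rw [e2 i]
      have : M 0 i.succ = x i ν := by simp [hM]
      rw [this]
      simp only [Fin.val_succ, pow_succ, rDet]
      ring
  have hcol' : M.det = M 0 0 * rDet t x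
      + ∑ α : Fin (m+1), -(if t α = μ then rDet (Function.update t α ν) x else 0) := by
    rw [hcol, e1']
    congr 1
    · simp [rDet]
    · apply Finset.sum_congr rfl
      intro α _
      rw [e3 α]
      have hval : M α.succ 0 = (if t α = μ then (1:ℝ) else 0) := by
        simp [hM, Pi.single_apply]
      rw [hval, rDet_update]
      simp only [Fin.val_succ, pow_succ, rDet]
      by_cases h : t α = μ
      · rw [if_pos h, if_pos h]; ring
      · rw [if_neg h, if_neg h]; ring
  have := hrow'.symm.trans hcol'
  have h2 : ∑ i : Fin (m+1), -((-1:ℝ)^(i:ℕ) * x i ν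
          * rDet t (Fin.cons (Pi.single μ 1) (x ∘ i.succAbove)))
      = ∑ α : Fin (m+1), -(if t α = μ then rDet (Function.update t α ν) x else 0) := by
    linarith [this]
  calc ∑ i : Fin (m+1), (-1:ℝ)^(i:ℕ) * x i ν
        * rDet t (Fin.cons (Pi.single μ 1) (x ∘ i.succAbove))
      = - ∑ i : Fin (m+1), -((-1:ℝ)^(i:ℕ) * x i ν
        * rDet t (Fin.cons (Pi.single μ 1) (x ∘ i.succAbove))) := by
        rw [← Finset.sum_neg_distrib]; simp
    _ = - ∑ α : Fin (m+1), -(if t α = μ then rDet (Function.update t α ν) x else 0) := by rw [h2]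
    _ = ∑ α : Fin (m+1), (if t α = μ then rDet (Function.update t α ν) x else 0) := by
        rw [← Finset.sum_neg_distrib]; simp

end Aux4

section Aux5
open Finset Equiv Matrix

variable {N : ℕ}

/-- Column-zero Laplace expansion of `rDet` with a distinguished first column. -/
lemma rDet_cons_col {m : ℕ} (t : Fin (m+1) → Fin N) (u : Fin N → ℝ) (v : Fin m → Fin N → ℝ) :
    rDet t (Fin.cons u v)
      = ∑ a : Fin (m+1), (-1:ℝ)^(a:ℕ) * u (t a) * rDet (t ∘ a.succAbove) v := by
  rw [rDet, Matrix.det_succ_column_zero]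
  apply Finset.sum_congr rfl
  intro a _
  have h1 : (Matrix.of fun a b => (Fin.cons u v : Fin (m+1) → Fin N → ℝ) b (t a)) a 0 = u (t a) := by
    simp
  have h2 : ((Matrix.of fun a b => (Fin.cons u v : Fin (m+1) → Fin N → ℝ) b (t a)).submatrix
      a.succAbove Fin.succ) = Matrix.of fun i b => v b ((t ∘ a.succAbove) i) := by
    ext i b
    simp
  rw [h1, h2, rDet]

variable {d k : ℕ}

lemma theta_rDet (m : Phase (d+1) k) (w : Fin (d+1) → Phase (d+1) k) :
    thetaEval (d+1) k m w
      = ∑ s : MultiIdx (d+1+k) (d+1), m.2 s * rDet (midx s) (fun b => (w b).1) := rfl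

lemma omega_p (P : MultiIdx (d+1+k) (d+1) → ℝ) (w : Fin (d+1) → Phase (d+1) k) :
    OmegaEval (d+1) k (Fin.cons ((0 : Fin (d+1+k) → ℝ), P) w)
      = ∑ s : MultiIdx (d+1+k) (d+1), P s * rDet (midx s) (fun b => (w b).1) := by
  rw [OmegaEval]
  apply Finset.sum_congr rfl
  intro s _
  rw [Matrix.det_succ_column_zero, Fin.sum_univ_succ]
  have hz : ∀ i : Fin (d+1), (-1:ℝ)^((i.succ : Fin (d+1+1)) : ℕ)
      * (Matrix.of fun a b : Fin (d+1+1) =>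
          (Fin.cons (((Fin.cons ((0 : Fin (d+1+k) → ℝ), P) w : Fin (d+1+1) → Phase (d+1) k) b).2 s)
            (fun j : Fin (d+1) => ((Fin.cons ((0 : Fin (d+1+k) → ℝ), P) w : Fin (d+1+1) → Phase (d+1) k) b).1 (midx s j))
            : Fin (d+1+1) → ℝ) a) i.succ 0
      * ((Matrix.of fun a b : Fin (d+1+1) =>
          (Fin.cons (((Fin.cons ((0 : Fin (d+1+k) → ℝ), P) w : Fin (d+1+1) → Phase (d+1) k) b).2 s)
            (fun j : Fin (d+1) => ((Fin.cons ((0 : Fin (d+1+k) → ℝ), P) w : Fin (d+1+1) → Phase (d+1) k) b).1 (midx s j))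
            : Fin (d+1+1) → ℝ) a).submatrix (i.succ).succAbove Fin.succ).det = 0 := by
    intro i
    simp
  rw [Finset.sum_congr rfl (fun i _ => hz i), Finset.sum_const, smul_zero, add_zero]
  simp only [Matrix.of_apply, Fin.cons_zero, Fin.val_zero, pow_zero, one_mul]
  have h2 : ((Matrix.of fun a b : Fin (d+1+1) =>
      (Fin.cons (((Fin.cons ((0 : Fin (d+1+k) → ℝ), P) w : Fin (d+1+1) → Phase (d+1) k) b).2 s)
        (fun j : Fin (d+1) => ((Fin.cons ((0 : Fin (d+1+k) → ℝ), P) w : Fin (d+1+1) → Phase (d+1) k) b).1 (midx s j))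
        : Fin (d+1+1) → ℝ) a).submatrix ((0 : Fin (d+1+1)).succAbove) Fin.succ)
      = Matrix.of fun a b : Fin (d+1) => (w b).1 (midx s a) := by
    ext a b
    simp [Fin.succAbove_zero]
  rw [h2, rDet]

lemma omega_q (u : Fin (d+1+k) → ℝ) (w : Fin (d+1) → Phase (d+1) k) :
    OmegaEval (d+1) k (Fin.cons ((u, 0) : Phase (d+1) k) w)
      = - ∑ i : Fin (d+1), (-1:ℝ)^(i:ℕ) * ∑ s : MultiIdx (d+1+k) (d+1),
          (w i).2 s * rDet (midx s) (Fin.cons u (fun j : Fin d => (w (i.succAbove j)).1)) := by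
  have key : OmegaEval (d+1) k (Fin.cons ((u, 0) : Phase (d+1) k) w)
      = ∑ s : MultiIdx (d+1+k) (d+1), ∑ i : Fin (d+1), (-1:ℝ)^((i:ℕ)+1) * (w i).2 s
          * rDet (midx s) (Fin.cons u (fun j : Fin d => (w (i.succAbove j)).1)) := by
    rw [OmegaEval]
    apply Finset.sum_congr rfl
    intro s _
    rw [Matrix.det_succ_row_zero, Fin.sum_univ_succ]
    have h0 : (Matrix.of fun a b : Fin (d+1+1) =>
        (Fin.cons (((Fin.cons ((u, 0) : Phase (d+1) k) w : Fin (d+1+1) → Phase (d+1) k) b).2 s)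
          (fun j : Fin (d+1) => ((Fin.cons ((u, 0) : Phase (d+1) k) w : Fin (d+1+1) → Phase (d+1) k) b).1 (midx s j))
          : Fin (d+1+1) → ℝ) a) 0 0 = 0 := by simp
    rw [h0, mul_zero, zero_mul, zero_add]
    apply Finset.sum_congr rfl
    intro i _
    simp only [Matrix.of_apply, Fin.cons_zero, Fin.cons_succ, Fin.val_succ]
    congr 1
    rw [rDet]
    congr 1
    ext a b
    simp only [Matrix.submatrix_apply, Matrix.of_apply, Fin.cons_succ]
    rw [show ((Fin.cons ((u, 0) : Phase (d+1) k) w : Fin (d+1+1) → Phase (d+1) k) ((i.succ).succAbove b))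
        = (Fin.cons ((u, 0) : Phase (d+1) k) (w ∘ i.succAbove) : Fin (d+1) → Phase (d+1) k) b
        from congrFun (cons_comp_succAbove _ w i) b]
    cases b using Fin.cases with
    | zero => simp
    | succ j => simp
  rw [key, Finset.sum_comm, ← Finset.sum_neg_distrib]
  apply Finset.sum_congr rfl
  intro i _
  rw [Finset.mul_sum, ← Finset.sum_neg_distrib]
  apply Finset.sum_congr rfl
  intro s _
  rw [pow_succ]
  ring

lemma omega_split (V : Phase (d+1) k) (w : Fin (d+1) → Phase (d+1) k) :
    OmegaEval (d+1) k (Fin.cons V w)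
      = OmegaEval (d+1) k (Fin.cons ((V.1, 0) : Phase (d+1) k) w)
        + OmegaEval (d+1) k (Fin.cons (((0 : Fin (d+1+k) → ℝ), V.2) : Phase (d+1) k) w) := by
  rw [OmegaEval, OmegaEval, OmegaEval, ← Finset.sum_add_distrib]
  apply Finset.sum_congr rfl
  intro s _
  rw [Matrix.det_succ_column_zero, Matrix.det_succ_column_zero, Matrix.det_succ_column_zero,
    ← Finset.sum_add_distrib]
  apply Finset.sum_congr rfl
  intro r _
  have hmin : ∀ (V' : Phase (d+1) k),
      ((Matrix.of fun a b : Fin (d+1+1) =>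
        (Fin.cons (((Fin.cons V' w : Fin (d+1+1) → Phase (d+1) k) b).2 s)
          (fun j : Fin (d+1) => ((Fin.cons V' w : Fin (d+1+1) → Phase (d+1) k) b).1 (midx s j))
          : Fin (d+1+1) → ℝ) a).submatrix r.succAbove Fin.succ)
      = Matrix.of fun a b : Fin (d+1) =>
        (Fin.cons ((w b).2 s) (fun j : Fin (d+1) => (w b).1 (midx s j)) : Fin (d+1+1) → ℝ) (r.succAbove a) := by
    intro V'
    ext a b
    simp
  rw [hmin V, hmin ((V.1, 0) : Phase (d+1) k), hmin (((0 : Fin (d+1+k) → ℝ), V.2) : Phase (d+1) k)]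
  have hval : ∀ (V' : Phase (d+1) k),
      (Matrix.of fun a b : Fin (d+1+1) =>
        (Fin.cons (((Fin.cons V' w : Fin (d+1+1) → Phase (d+1) k) b).2 s)
          (fun j : Fin (d+1) => ((Fin.cons V' w : Fin (d+1+1) → Phase (d+1) k) b).1 (midx s j))
          : Fin (d+1+1) → ℝ) a) r 0
      = (Fin.cons (V'.2 s) (fun j : Fin (d+1) => V'.1 (midx s j)) : Fin (d+1+1) → ℝ) r := by
    intro V'; simp
  rw [hval V, hval ((V.1, 0) : Phase (d+1) k), hval (((0 : Fin (d+1+k) → ℝ), V.2) : Phase (d+1) k)]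
  cases r using Fin.cases with
  | zero =>
    simp only [Fin.cons_zero, Fin.cons_succ, Prod.fst, Prod.snd]
    simp
    try ring
  | succ a =>
    simp only [Fin.cons_zero, Fin.cons_succ, Prod.fst, Prod.snd]
    simp
    try ring

lemma omega_eP (s0 : MultiIdx (d+1+k) (d+1)) (w : Fin (d+1) → Phase (d+1) k) :
    OmegaEval (d+1) k (Fin.cons (eP (d+1) k s0) w)
      = rDet (midx s0) (fun b => (w b).1) := by
  rw [show eP (d+1) k s0 = ((0 : Fin (d+1+k) → ℝ), (Pi.single s0 1 : MultiIdx (d+1+k) (d+1) → ℝ)) from rfl]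
  rw [omega_p]
  rw [Finset.sum_congr rfl (fun s _ => by
    rw [Pi.single_apply, ite_mul, one_mul, zero_mul] :
      ∀ s ∈ Finset.univ, (Pi.single s0 1 : MultiIdx (d+1+k) (d+1) → ℝ) s * rDet (midx s) (fun b => (w b).1)
        = if s = s0 then rDet (midx s) (fun b => (w b).1) else 0)]
  rw [Finset.sum_ite_eq' Finset.univ s0 (fun s => rDet (midx s) (fun b => (w b).1))]
  simp

end Aux5

section Aux6
open Finset Equiv Matrix

variable {d k : ℕ}

lemma clm_basis {I : Type*} [Fintype I] [DecidableEq I] (L : (I → ℝ) →L[ℝ] ℝ) (x : I → ℝ) :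
    L x = ∑ ν : I, x ν * L (Pi.single ν 1) := by
  conv_lhs => rw [← Finset.univ_sum_single x]
  rw [map_sum]
  apply Finset.sum_congr rfl
  intro ν _
  have h : Pi.single ν (x ν) = (x ν) • (Pi.single ν 1 : I → ℝ) := by
    ext j
    by_cases hj : j = ν
    · subst hj; simp
    · simp [Pi.single_apply, hj]
  rw [h, _root_.map_smul, smul_eq_mul]

lemma fst_cons (u : Phase (d+1) k) (v : Fin d → Phase (d+1) k) :
    (fun b => ((Fin.cons u v : Fin (d+1) → Phase (d+1) k) b).1)
      = Fin.cons u.1 (fun j => (v j).1) := by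
  funext b
  cases b using Fin.cases with
  | zero => simp
  | succ j => simp

/-- derivative of `m' ↦ f m'.1` through the first projection -/
lemma hasFDeriv_comp_fst (f : (Fin (d+1+k) → ℝ) → ℝ) (hf : ContDiff ℝ (⊤ : ℕ∞) f) (m : Phase (d+1) k) :
    HasFDerivAt (fun m' : Phase (d+1) k => f m'.1)
      ((fderiv ℝ f m.1).comp (ContinuousLinearMap.fst ℝ _ _)) m :=
  ((hf.differentiable (by simp) m.1).hasFDerivAt).comp m hasFDerivAt_fst

lemma fderiv_Qzeta (c : MultiIdx (d + 1 + k) (d + 1) → Fin (d + 1) → (Fin (d + 1 + k) → ℝ) → ℝ)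
    (hc : ∀ s α, ContDiff ℝ (⊤ : ℕ∞) (c s α)) (v : Fin d → Phase (d+1) k) (m x : Phase (d+1) k) :
    fderiv ℝ (fun m' => Qzeta d k c m' v) m x
      = ∑ s : MultiIdx (d+1+k) (d+1), ∑ α : Fin (d+1),
          fderiv ℝ (c s α) m.1 x.1
            * OmegaEval (d + 1) k (Fin.cons (eP (d + 1) k s) (Fin.cons (eQ (d + 1) k (midx s α)) v)) := by
  have h : HasFDerivAt (fun m' => Qzeta d k c m' v)
      (∑ s : MultiIdx (d+1+k) (d+1), ∑ α : Fin (d+1),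
        OmegaEval (d + 1) k (Fin.cons (eP (d + 1) k s) (Fin.cons (eQ (d + 1) k (midx s α)) v))
          • ((fderiv ℝ (c s α) m.1).comp (ContinuousLinearMap.fst ℝ _ _))) m := by
    apply HasFDerivAt.fun_sum
    intro s _
    apply HasFDerivAt.fun_sum
    intro α _
    exact (hasFDeriv_comp_fst (c s α) (hc s α) m).mul_const _
  rw [h.fderiv]
  rw [ContinuousLinearMap.sum_apply]
  apply Finset.sum_congr rfl
  intro s _
  rw [ContinuousLinearMap.sum_apply]
  apply Finset.sum_congr rfl
  intro α _
  rw [ContinuousLinearMap.smul_apply, ContinuousLinearMap.comp_apply]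
  simp [mul_comm]

lemma fderiv_pmul (ξf : Fin (d + 1 + k) → (Fin (d + 1 + k) → ℝ) → ℝ)
    (hξf : ∀ μ, ContDiff ℝ (⊤ : ℕ∞) (ξf μ)) (s : MultiIdx (d+1+k) (d+1)) (ρ : Fin (d+1+k))
    (m : Phase (d+1) k) :
    HasFDerivAt (fun m' : Phase (d+1) k => m'.2 s * ξf ρ m'.1)
      ((m.2 s) • ((fderiv ℝ (ξf ρ) m.1).comp (ContinuousLinearMap.fst ℝ _ _))
        + (ξf ρ m.1) • ((ContinuousLinearMap.proj s).comp (ContinuousLinearMap.snd ℝ _ _))) m := by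
  have h1 : HasFDerivAt (fun m' : Phase (d+1) k => m'.2 s)
      ((ContinuousLinearMap.proj s).comp (ContinuousLinearMap.snd ℝ _ _)) m :=
    ((ContinuousLinearMap.proj s : (MultiIdx (d+1+k) (d+1) → ℝ) →L[ℝ] ℝ).comp
      (ContinuousLinearMap.snd ℝ (Fin (d+1+k) → ℝ) (MultiIdx (d+1+k) (d+1) → ℝ))).hasFDerivAt
  have h2 := hasFDeriv_comp_fst (ξf ρ) (hξf ρ) m
  exact h1.mul h2

lemma fderiv_Pxi (ξf : Fin (d + 1 + k) → (Fin (d + 1 + k) → ℝ) → ℝ)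
    (hξf : ∀ μ, ContDiff ℝ (⊤ : ℕ∞) (ξf μ)) (v : Fin d → Phase (d+1) k) (m x : Phase (d+1) k) :
    fderiv ℝ (fun m' => Pxi d k ξf m' v) m x
      = ∑ s : MultiIdx (d+1+k) (d+1),
          (x.2 s * rDet (midx s) (Fin.cons (fun ρ => ξf ρ m.1) (fun j => (v j).1))
            + m.2 s * rDet (midx s) (Fin.cons (fun ρ => fderiv ℝ (ξf ρ) m.1 x.1) (fun j => (v j).1))) := by
  have hrw : (fun m' => Pxi d k ξf m' v)
      = fun m' : Phase (d+1) k => ∑ s : MultiIdx (d+1+k) (d+1), ∑ a : Fin (d+1),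
          ((-1:ℝ)^(a:ℕ) * rDet (midx s ∘ a.succAbove) (fun j => (v j).1))
            * (m'.2 s * ξf (midx s a) m'.1) := by
    funext m'
    rw [Pxi, theta_rDet]
    apply Finset.sum_congr rfl
    intro s _
    rw [show (fun b => ((Fin.cons (qVF (d+1) k ξf m') v : Fin (d+1) → Phase (d+1) k) b).1)
        = Fin.cons (fun ρ => ξf ρ m'.1) (fun j => (v j).1) from fst_cons _ v]
    rw [rDet_cons_col, Finset.mul_sum]
    apply Finset.sum_congr rfl
    intro a _
    ring
  rw [hrw]
  have h : HasFDerivAt (fun m' : Phase (d+1) k => ∑ s : MultiIdx (d+1+k) (d+1), ∑ a : Fin (d+1),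
      ((-1:ℝ)^(a:ℕ) * rDet (midx s ∘ a.succAbove) (fun j => (v j).1))
        * (m'.2 s * ξf (midx s a) m'.1))
      (∑ s : MultiIdx (d+1+k) (d+1), ∑ a : Fin (d+1),
        ((-1:ℝ)^(a:ℕ) * rDet (midx s ∘ a.succAbove) (fun j => (v j).1))
          • ((m.2 s) • ((fderiv ℝ (ξf (midx s a)) m.1).comp (ContinuousLinearMap.fst ℝ (Fin (d+1+k) → ℝ) (MultiIdx (d+1+k) (d+1) → ℝ)))
            + (ξf (midx s a) m.1) • ((ContinuousLinearMap.proj s).comp (ContinuousLinearMap.snd ℝ (Fin (d+1+k) → ℝ) (MultiIdx (d+1+k) (d+1) → ℝ))))) m := by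
    apply HasFDerivAt.fun_sum
    intro s _
    apply HasFDerivAt.fun_sum
    intro a _
    exact (fderiv_pmul ξf hξf s (midx s a) m).const_mul _
  rw [h.fderiv]
  rw [ContinuousLinearMap.sum_apply]
  have key : ∀ s : MultiIdx (d+1+k) (d+1),
      (((∑ a : Fin (d+1),
        ((-1:ℝ)^(a:ℕ) * rDet (midx s ∘ a.succAbove) (fun j => (v j).1))
          • ((m.2 s) • ((fderiv ℝ (ξf (midx s a)) m.1).comp (ContinuousLinearMap.fst ℝ _ _))
            + (ξf (midx s a) m.1) • ((ContinuousLinearMap.proj s).comp (ContinuousLinearMap.snd ℝ _ _)))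
            : Phase (d+1) k →L[ℝ] ℝ)) x)
      = (x.2 s * rDet (midx s) (Fin.cons (fun ρ => ξf ρ m.1) (fun j => (v j).1))
            + m.2 s * rDet (midx s) (Fin.cons (fun ρ => fderiv ℝ (ξf ρ) m.1 x.1) (fun j => (v j).1))) := by
    intro s
    rw [ContinuousLinearMap.sum_apply]
    rw [rDet_cons_col (midx s) (fun ρ => ξf ρ m.1) (fun j => (v j).1)]
    rw [rDet_cons_col (midx s) (fun ρ => fderiv ℝ (ξf ρ) m.1 x.1) (fun j => (v j).1)]
    rw [Finset.mul_sum, Finset.mul_sum, ← Finset.sum_add_distrib]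
    apply Finset.sum_congr rfl
    intro a _
    simp only [ContinuousLinearMap.smul_apply, ContinuousLinearMap.add_apply,
      ContinuousLinearMap.comp_apply, ContinuousLinearMap.proj_apply,
      ContinuousLinearMap.coe_snd', ContinuousLinearMap.coe_fst', smul_eq_mul]
    ring
  rw [Finset.sum_congr rfl (fun s _ => key s)]

end Aux6

section Aux7
open Finset Equiv Matrix

variable {N n : ℕ}

lemma sgn_sq (σ : Equiv.Perm (Fin n)) :
    ((Equiv.Perm.sign σ : ℤ) : ℝ) * ((Equiv.Perm.sign σ : ℤ) : ℝ) = 1 := by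
  have h := Int.units_mul_self (Equiv.Perm.sign σ)
  have h2 : ((Equiv.Perm.sign σ : ℤ) * (Equiv.Perm.sign σ : ℤ)) = 1 := by
    rw [← Units.val_mul, h]
    rfl
  exact_mod_cast h2

lemma update_comp (t : Fin n → Fin N) (σ : Equiv.Perm (Fin n)) (α : Fin n) (ν : Fin N) :
    Function.update (t ∘ σ) α ν = (Function.update t (σ α) ν) ∘ σ := by
  rw [Function.update_comp_equiv t σ (σ α) ν, Equiv.symm_apply_apply]

/-- The core combinatorial identity behind `dq^ν ∧ (∂/∂q^μ ⨼ θ) = Π^ν_μ ⨼ Ω`. -/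
lemma diamond {d k : ℕ} (p : MultiIdx (d+1+k) (d+1) → ℝ) (x : Fin (d+1) → Fin (d+1+k) → ℝ)
    (ν μ : Fin (d+1+k)) :
    ∑ s : MultiIdx (d+1+k) (d+1), p s * ∑ α : Fin (d+1),
        (if midx s α = μ then rDet (Function.update (midx s) α ν) x else 0)
      = ∑ s : MultiIdx (d+1+k) (d+1), (∑ α : Fin (d+1),
          if midx s α = ν then pext p (Function.update (midx s) α μ) else 0) * rDet (midx s) x := by
  classical
  set F : (Fin (d+1) → Fin (d+1+k)) → ℝ := fun t => ∑ α : Fin (d+1),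
    (if t α = μ then pext p t * rDet (Function.update t α ν) x else 0) with hF
  set G : (Fin (d+1) → Fin (d+1+k)) → ℝ := fun t => ∑ α : Fin (d+1),
    (if t α = ν then pext p (Function.update t α μ) * rDet t x else 0) with hG
  have hF0 : ∀ t, ¬ Function.Injective t → F t = 0 := by
    intro t ht
    have hp : pext p t = 0 := by rw [pext, dif_neg ht]
    simp [hF, hp]
  have hG0 : ∀ t, ¬ Function.Injective t → G t = 0 := by
    intro t ht
    have hr : rDet t x = 0 := rDet_zero_of_not_injective ht x
    simp [hG, hr]
  have hF1 : ∀ (s : MultiIdx (d+1+k) (d+1)) (σ : Equiv.Perm (Fin (d+1))),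
      F (midx s ∘ σ) = F (midx s) := by
    intro s σ
    rw [hF]
    simp only
    have step : ∀ α, (if (midx s ∘ σ) α = μ then
          pext p (midx s ∘ σ) * rDet (Function.update (midx s ∘ σ) α ν) x else 0)
        = (fun β => if midx s β = μ then
            pext p (midx s) * rDet (Function.update (midx s) β ν) x else 0) (σ α) := by
      intro α
      simp only [Function.comp_apply]
      congr 1
      rw [pext_comp, update_comp, rDet_comp]
      rw [mul_mul_mul_comm, sgn_sq, one_mul]
    rw [Finset.sum_congr rfl (fun α _ => step α)]
    exact Equiv.sum_comp σ (fun β => if midx s β = μ then pext p (midx s) * rDet (Function.update (midx s) β ν) x else 0)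
  have hG1 : ∀ (s : MultiIdx (d+1+k) (d+1)) (σ : Equiv.Perm (Fin (d+1))),
      G (midx s ∘ σ) = G (midx s) := by
    intro s σ
    rw [hG]
    simp only
    have step : ∀ α, (if (midx s ∘ σ) α = ν then
          pext p (Function.update (midx s ∘ σ) α μ) * rDet (midx s ∘ σ) x else 0)
        = (fun β => if midx s β = ν then
            pext p (Function.update (midx s) β μ) * rDet (midx s) x else 0) (σ α) := by
      intro α
      simp only [Function.comp_apply]
      congr 1
      rw [update_comp, pext_comp, rDet_comp]
      rw [mul_mul_mul_comm, sgn_sq, one_mul]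
    rw [Finset.sum_congr rfl (fun α _ => step α)]
    exact Equiv.sum_comp σ (fun β => if midx s β = ν then pext p (Function.update (midx s) β μ) * rDet (midx s) x else 0)
  have hFG : ∑ t : Fin (d+1) → Fin (d+1+k), F t = ∑ t : Fin (d+1) → Fin (d+1+k), G t := by
    rw [hF, hG]
    simp only
    rw [Finset.sum_comm]
    conv_rhs => rw [Finset.sum_comm]
    apply Finset.sum_congr rfl
    intro α _
    exact sum_update_swap (N := d+1+k) (n := d+1) α μ ν (fun t t' => pext p t * rDet t' x)
  have e1 := sum_tuples_eq F hF0 hF1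
  have e2 := sum_tuples_eq G hG0 hG1
  have key : ∑ s : MultiIdx (d+1+k) (d+1), F (midx s) = ∑ s : MultiIdx (d+1+k) (d+1), G (midx s) := by
    have hfac : ((d+1).factorial : ℝ) ≠ 0 := Nat.cast_ne_zero.2 (Nat.factorial_ne_zero _)
    apply mul_left_cancel₀ hfac
    rw [← e1, ← e2, hFG]
  calc ∑ s : MultiIdx (d+1+k) (d+1), p s * ∑ α : Fin (d+1),
        (if midx s α = μ then rDet (Function.update (midx s) α ν) x else 0)
      = ∑ s : MultiIdx (d+1+k) (d+1), F (midx s) := by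
        apply Finset.sum_congr rfl
        intro s _
        rw [hF]
        simp only
        rw [Finset.mul_sum]
        apply Finset.sum_congr rfl
        intro α _
        rw [mul_ite, mul_zero, pext_midx]
    _ = ∑ s : MultiIdx (d+1+k) (d+1), G (midx s) := key
    _ = ∑ s : MultiIdx (d+1+k) (d+1), (∑ α : Fin (d+1),
          if midx s α = ν then pext p (Function.update (midx s) α μ) else 0) * rDet (midx s) x := by
        apply Finset.sum_congr rfl
        intro s _
        rw [hG]
        simp only
        rw [Finset.sum_mul]
        apply Finset.sum_congr rfl
        intro α _
        rw [ite_mul, zero_mul]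

lemma diff_extC {d k : ℕ} (c : MultiIdx (d + 1 + k) (d + 1) → Fin (d + 1) → (Fin (d + 1 + k) → ℝ) → ℝ)
    (hc : ∀ s α, ContDiff ℝ (⊤ : ℕ∞) (c s α)) (t : Fin (d+1) → Fin (d+1+k)) (α : Fin (d+1)) :
    Differentiable ℝ (extC c t α) := by
  by_cases h : Function.Injective t
  · have he : extC c t α = fun q => ((Equiv.Perm.sign (sortPerm t h) : ℤ) : ℝ)
        * c ⟨Finset.univ.image t, tupCard t h⟩ (sortPerm t h α) q :=
      funext fun q => by rw [extC, dif_pos h]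
    rw [he]
    exact (((hc _ _).differentiable (by simp))).const_mul _
  · have he : extC c t α = fun _ => 0 := funext fun q => by rw [extC, dif_neg h]
    rw [he]
    exact differentiable_const 0

lemma fderiv_extC_comp {d k : ℕ} (c : MultiIdx (d + 1 + k) (d + 1) → Fin (d + 1) → (Fin (d + 1 + k) → ℝ) → ℝ)
    (hc : ∀ s α, ContDiff ℝ (⊤ : ℕ∞) (c s α)) (t : Fin (d+1) → Fin (d+1+k)) (σ : Equiv.Perm (Fin (d+1)))
    (α : Fin (d+1)) (q y : Fin (d+1+k) → ℝ) :
    fderiv ℝ (extC c (t ∘ σ) α) q y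
      = ((Equiv.Perm.sign σ : ℤ) : ℝ) * fderiv ℝ (extC c t (σ α)) q y := by
  rw [extC_comp c t σ α]
  rw [fderiv_const_mul ((diff_extC c hc t (σ α)) q) _]
  simp

lemma fderiv_extC_zero {d k : ℕ} (c : MultiIdx (d + 1 + k) (d + 1) → Fin (d + 1) → (Fin (d + 1 + k) → ℝ) → ℝ)
    (t : Fin (d+1) → Fin (d+1+k)) (α : Fin (d+1)) (h : ¬ Function.Injective t)
    (q y : Fin (d+1+k) → ℝ) : fderiv ℝ (extC c t α) q y = 0 := by
  have he : extC c t α = fun _ => (0:ℝ) := funext fun q => by rw [extC, dif_neg h]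
  rw [he, fderiv_fun_const]
  simp

/-- The core combinatorial identity behind part 1. -/
lemma phi_identity {d k : ℕ} (c : MultiIdx (d + 1 + k) (d + 1) → Fin (d + 1) → (Fin (d + 1 + k) → ℝ) → ℝ)
    (hc : ∀ s α, ContDiff ℝ (⊤ : ℕ∞) (c s α)) (m1 : Fin (d+1+k) → ℝ) (x : Fin (d+1) → Fin (d+1+k) → ℝ) :
    ∑ s : MultiIdx (d+1+k) (d+1), ∑ α : Fin (d+1), ∑ ν : Fin (d+1+k),
        fderiv ℝ (c s α) m1 (Pi.single ν 1) * rDet (Function.update (midx s) α ν) x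
      = ∑ s : MultiIdx (d+1+k) (d+1), (∑ α : Fin (d+1), ∑ ν : Fin (d+1+k),
          fderiv ℝ (extC c (Function.update (midx s) α ν) α) m1 (Pi.single (midx s α) 1))
            * rDet (midx s) x := by
  classical
  set F : (Fin (d+1) → Fin (d+1+k)) → ℝ := fun t => ∑ α : Fin (d+1), ∑ ν : Fin (d+1+k),
    fderiv ℝ (extC c t α) m1 (Pi.single ν 1) * rDet (Function.update t α ν) x with hF
  set G : (Fin (d+1) → Fin (d+1+k)) → ℝ := fun t => ∑ α : Fin (d+1), ∑ ν : Fin (d+1+k),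
    fderiv ℝ (extC c (Function.update t α ν) α) m1 (Pi.single (t α) 1) * rDet t x with hG
  have hF0 : ∀ t, ¬ Function.Injective t → F t = 0 := by
    intro t ht
    rw [hF]
    simp only
    apply Finset.sum_eq_zero
    intro α _
    apply Finset.sum_eq_zero
    intro ν _
    rw [fderiv_extC_zero c t α ht, zero_mul]
  have hG0 : ∀ t, ¬ Function.Injective t → G t = 0 := by
    intro t ht
    rw [hG]
    simp only
    apply Finset.sum_eq_zero
    intro α _
    apply Finset.sum_eq_zero
    intro ν _
    rw [rDet_zero_of_not_injective ht x, mul_zero]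
  have hF1 : ∀ (s : MultiIdx (d+1+k) (d+1)) (σ : Equiv.Perm (Fin (d+1))),
      F (midx s ∘ σ) = F (midx s) := by
    intro s σ
    rw [hF]
    simp only
    have step : ∀ α, (∑ ν : Fin (d+1+k),
        fderiv ℝ (extC c (midx s ∘ σ) α) m1 (Pi.single ν 1)
          * rDet (Function.update (midx s ∘ σ) α ν) x)
        = (fun β => ∑ ν : Fin (d+1+k), fderiv ℝ (extC c (midx s) β) m1 (Pi.single ν 1)
            * rDet (Function.update (midx s) β ν) x) (σ α) := by
      intro α
      simp only
      apply Finset.sum_congr rfl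
      intro ν _
      rw [fderiv_extC_comp c hc (midx s) σ α, update_comp, rDet_comp]
      rw [mul_mul_mul_comm, sgn_sq, one_mul]
    rw [Finset.sum_congr rfl (fun α _ => step α)]
    exact Equiv.sum_comp σ (fun β => ∑ ν : Fin (d+1+k), fderiv ℝ (extC c (midx s) β) m1 (Pi.single ν 1) * rDet (Function.update (midx s) β ν) x)
  have hG1 : ∀ (s : MultiIdx (d+1+k) (d+1)) (σ : Equiv.Perm (Fin (d+1))),
      G (midx s ∘ σ) = G (midx s) := by
    intro s σ
    rw [hG]
    simp only
    have step : ∀ α, (∑ ν : Fin (d+1+k),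
        fderiv ℝ (extC c (Function.update (midx s ∘ σ) α ν) α) m1 (Pi.single ((midx s ∘ σ) α) 1)
          * rDet (midx s ∘ σ) x)
        = (fun β => ∑ ν : Fin (d+1+k),
            fderiv ℝ (extC c (Function.update (midx s) β ν) β) m1 (Pi.single (midx s β) 1)
              * rDet (midx s) x) (σ α) := by
      intro α
      simp only
      apply Finset.sum_congr rfl
      intro ν _
      rw [update_comp, fderiv_extC_comp c hc (Function.update (midx s) (σ α) ν) σ α, rDet_comp]
      simp only [Function.comp_apply]
      rw [mul_mul_mul_comm, sgn_sq, one_mul]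
    rw [Finset.sum_congr rfl (fun α _ => step α)]
    exact Equiv.sum_comp σ (fun β => ∑ ν : Fin (d+1+k), fderiv ℝ (extC c (Function.update (midx s) β ν) β) m1 (Pi.single (midx s β) 1) * rDet (midx s) x)
  have hFG : ∑ t : Fin (d+1) → Fin (d+1+k), F t = ∑ t : Fin (d+1) → Fin (d+1+k), G t := by
    rw [hF, hG]
    simp only
    rw [Finset.sum_comm]
    conv_rhs => rw [Finset.sum_comm]
    apply Finset.sum_congr rfl
    intro α _
    exact sum_update_pair (N := d+1+k) (n := d+1) α
      (fun t ν t' => fderiv ℝ (extC c t α) m1 (Pi.single ν 1) * rDet t' x)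
  have e1 := sum_tuples_eq F hF0 hF1
  have e2 := sum_tuples_eq G hG0 hG1
  have key : ∑ s : MultiIdx (d+1+k) (d+1), F (midx s) = ∑ s : MultiIdx (d+1+k) (d+1), G (midx s) := by
    have hfac : ((d+1).factorial : ℝ) ≠ 0 := Nat.cast_ne_zero.2 (Nat.factorial_ne_zero _)
    apply mul_left_cancel₀ hfac
    rw [← e1, ← e2, hFG]
  calc ∑ s : MultiIdx (d+1+k) (d+1), ∑ α : Fin (d+1), ∑ ν : Fin (d+1+k),
        fderiv ℝ (c s α) m1 (Pi.single ν 1) * rDet (Function.update (midx s) α ν) x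
      = ∑ s : MultiIdx (d+1+k) (d+1), F (midx s) := by
        apply Finset.sum_congr rfl
        intro s _
        rw [hF]
        simp only
        apply Finset.sum_congr rfl
        intro α _
        apply Finset.sum_congr rfl
        intro ν _
        rw [extC_midx]
    _ = ∑ s : MultiIdx (d+1+k) (d+1), G (midx s) := key
    _ = _ := by
        apply Finset.sum_congr rfl
        intro s _
        rw [hG]
        simp only
        rw [Finset.sum_mul]
        apply Finset.sum_congr rfl
        intro α _
        rw [Finset.sum_mul]

end Aux7

section Aux8
open Finset Equiv Matrix

variable {d k : ℕ}

lemma part3 (ν μ : Fin (d + 1 + k)) (m : Phase (d + 1) k)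
    (w : Fin (d + 1) → Phase (d + 1) k) :
    (∑ i : Fin (d + 1), (-1 : ℝ) ^ (i : ℕ) * (w i).1 ν *
        thetaEval (d + 1) k m (Fin.cons (eQ (d + 1) k μ) (w ∘ i.succAbove)))
      = OmegaEval (d + 1) k (Fin.cons (PiVF (d + 1) k ν μ m) w) := by
  classical
  have hθ : ∀ i : Fin (d+1), thetaEval (d + 1) k m (Fin.cons (eQ (d + 1) k μ) (w ∘ i.succAbove))
      = ∑ s : MultiIdx (d+1+k) (d+1), m.2 s
          * rDet (midx s) (Fin.cons (Pi.single μ 1) ((fun b => (w b).1) ∘ i.succAbove)) := by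
    intro i
    rw [theta_rDet]
    apply Finset.sum_congr rfl
    intro s _
    congr 1
    rw [show (fun b => ((Fin.cons (eQ (d+1) k μ) (w ∘ i.succAbove) : Fin (d+1) → Phase (d+1) k) b).1)
        = Fin.cons ((eQ (d+1) k μ).1) (fun j => ((w ∘ i.succAbove) j).1) from fst_cons _ _]
    rfl
  have hRHS : OmegaEval (d + 1) k (Fin.cons (PiVF (d + 1) k ν μ m) w)
      = ∑ s : MultiIdx (d+1+k) (d+1),
          (∑ α : Fin (d+1), if midx s α = ν then pext m.2 (Function.update (midx s) α μ) else 0)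
            * rDet (midx s) (fun b => (w b).1) := by
    rw [show PiVF (d + 1) k ν μ m = ((0 : Fin (d+1+k) → ℝ),
      fun s => ∑ α : Fin (d+1), if midx s α = ν then pext m.2 (Function.update (midx s) α μ) else 0)
      from rfl]
    rw [omega_p]
  rw [hRHS]
  calc ∑ i : Fin (d + 1), (-1 : ℝ) ^ (i : ℕ) * (w i).1 ν *
        thetaEval (d + 1) k m (Fin.cons (eQ (d + 1) k μ) (w ∘ i.succAbove))
      = ∑ i : Fin (d + 1), ∑ s : MultiIdx (d+1+k) (d+1),
          m.2 s * ((-1 : ℝ) ^ (i : ℕ) * (w i).1 ν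
            * rDet (midx s) (Fin.cons (Pi.single μ 1) ((fun b => (w b).1) ∘ i.succAbove))) := by
        apply Finset.sum_congr rfl
        intro i _
        rw [hθ i, Finset.mul_sum]
        apply Finset.sum_congr rfl
        intro s _
        ring
    _ = ∑ s : MultiIdx (d+1+k) (d+1), ∑ i : Fin (d + 1),
          m.2 s * ((-1 : ℝ) ^ (i : ℕ) * (w i).1 ν
            * rDet (midx s) (Fin.cons (Pi.single μ 1) ((fun b => (w b).1) ∘ i.succAbove))) :=
        Finset.sum_comm
    _ = ∑ s : MultiIdx (d+1+k) (d+1), m.2 s * ∑ α : Fin (d+1),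
          (if midx s α = μ then rDet (Function.update (midx s) α ν) (fun b => (w b).1) else 0) := by
        apply Finset.sum_congr rfl
        intro s _
        rw [← Finset.mul_sum]
        congr 1
        exact star_identity (midx s) ν μ (fun b => (w b).1)
    _ = ∑ s : MultiIdx (d+1+k) (d+1),
          (∑ α : Fin (d+1), if midx s α = ν then pext m.2 (Function.update (midx s) α μ) else 0)
            * rDet (midx s) (fun b => (w b).1) := diamond m.2 (fun b => (w b).1) ν μ

end Aux8

section Aux9
open Finset Equiv Matrix

variable {d k : ℕ}

lemma part1 (c : MultiIdx (d + 1 + k) (d + 1) → Fin (d + 1) → (Fin (d + 1 + k) → ℝ) → ℝ)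
    (hc : ∀ s α, ContDiff ℝ (⊤ : ℕ∞) (c s α)) (m : Phase (d + 1) k)
    (w : Fin (d + 1) → Phase (d + 1) k) :
    dEval (Qzeta d k c) m w = - OmegaEval (d + 1) k (Fin.cons (XiQ d k c m) w) := by
  classical
  have hRHS : OmegaEval (d + 1) k (Fin.cons (XiQ d k c m) w)
      = ∑ s : MultiIdx (d+1+k) (d+1),
          (- ∑ α : Fin (d + 1), ∑ ν : Fin (d + 1 + k),
            fderiv ℝ (extC c (Function.update (fun a => midx s a) α ν) α) m.1
              (Pi.single (midx s α) 1)) * rDet (midx s) (fun b => (w b).1) := by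
    rw [show XiQ d k c m = ((0 : Fin (d+1+k) → ℝ),
      fun s => - ∑ α : Fin (d + 1), ∑ ν : Fin (d + 1 + k),
        fderiv ℝ (extC c (Function.update (fun a => midx s a) α ν) α) m.1
          (Pi.single (midx s α) 1)) from rfl]
    rw [omega_p]
  have hK : ∀ (s : MultiIdx (d+1+k) (d+1)) (α : Fin (d+1)) (i : Fin (d+1)),
      OmegaEval (d + 1) k (Fin.cons (eP (d + 1) k s)
        (Fin.cons (eQ (d + 1) k (midx s α)) (w ∘ i.succAbove)))
      = rDet (midx s) (Fin.cons (Pi.single (midx s α) 1) ((fun b => (w b).1) ∘ i.succAbove)) := by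
    intro s α i
    rw [omega_eP]
    rw [show (fun b => ((Fin.cons (eQ (d+1) k (midx s α)) (w ∘ i.succAbove)
        : Fin (d+1) → Phase (d+1) k) b).1)
      = Fin.cons ((eQ (d+1) k (midx s α)).1) (fun j => ((w ∘ i.succAbove) j).1) from fst_cons _ _]
    rfl
  have hcol : ∀ (s : MultiIdx (d+1+k) (d+1)) (α : Fin (d+1)) (ν : Fin (d+1+k)),
      (∑ β : Fin (d+1), if midx s β = midx s α
          then rDet (Function.update (midx s) β ν) (fun b => (w b).1) else 0)
        = rDet (Function.update (midx s) α ν) (fun b => (w b).1) := by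
    intro s α ν
    rw [Finset.sum_congr rfl (fun β _ =>
      if_congr (Function.Injective.eq_iff (midx_injective s)) rfl rfl :
      ∀ β ∈ Finset.univ, (if midx s β = midx s α
          then rDet (Function.update (midx s) β ν) (fun b => (w b).1) else 0)
        = if β = α then rDet (Function.update (midx s) β ν) (fun b => (w b).1) else 0)]
    rw [Finset.sum_ite_eq' Finset.univ α
      (fun β => rDet (Function.update (midx s) β ν) (fun b => (w b).1))]
    simp
  have hD : dEval (Qzeta d k c) m w
      = ∑ i : Fin (d+1), (-1:ℝ)^(i:ℕ) * ∑ s : MultiIdx (d+1+k) (d+1), ∑ α : Fin (d+1),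
          fderiv ℝ (c s α) m.1 (w i).1
            * rDet (midx s) (Fin.cons (Pi.single (midx s α) 1) ((fun b => (w b).1) ∘ i.succAbove)) := by
    rw [dEval]
    apply Finset.sum_congr rfl
    intro i _
    congr 1
    rw [fderiv_Qzeta c hc (w ∘ i.succAbove) m (w i)]
    apply Finset.sum_congr rfl
    intro s _
    apply Finset.sum_congr rfl
    intro α _
    rw [hK s α i]
  rw [hD, hRHS]
  calc ∑ i : Fin (d+1), (-1:ℝ)^(i:ℕ) * ∑ s : MultiIdx (d+1+k) (d+1), ∑ α : Fin (d+1),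
          fderiv ℝ (c s α) m.1 (w i).1
            * rDet (midx s) (Fin.cons (Pi.single (midx s α) 1) ((fun b => (w b).1) ∘ i.succAbove))
      = ∑ i : Fin (d+1), ∑ s : MultiIdx (d+1+k) (d+1), ∑ α : Fin (d+1), ∑ ν : Fin (d+1+k),
          fderiv ℝ (c s α) m.1 (Pi.single ν 1)
            * ((-1:ℝ)^(i:ℕ) * (w i).1 ν
              * rDet (midx s) (Fin.cons (Pi.single (midx s α) 1) ((fun b => (w b).1) ∘ i.succAbove))) := by
        apply Finset.sum_congr rfl
        intro i _
        rw [Finset.mul_sum]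
        apply Finset.sum_congr rfl
        intro s _
        rw [Finset.mul_sum]
        apply Finset.sum_congr rfl
        intro α _
        rw [clm_basis (fderiv ℝ (c s α) m.1) (w i).1, Finset.sum_mul, Finset.mul_sum]
        apply Finset.sum_congr rfl
        intro ν _
        ring
    _ = ∑ s : MultiIdx (d+1+k) (d+1), ∑ α : Fin (d+1), ∑ ν : Fin (d+1+k), ∑ i : Fin (d+1),
          fderiv ℝ (c s α) m.1 (Pi.single ν 1)
            * ((-1:ℝ)^(i:ℕ) * (w i).1 ν
              * rDet (midx s) (Fin.cons (Pi.single (midx s α) 1) ((fun b => (w b).1) ∘ i.succAbove))) := by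
        rw [Finset.sum_comm]
        apply Finset.sum_congr rfl
        intro s _
        rw [Finset.sum_comm]
        apply Finset.sum_congr rfl
        intro α _
        rw [Finset.sum_comm]
    _ = ∑ s : MultiIdx (d+1+k) (d+1), ∑ α : Fin (d+1), ∑ ν : Fin (d+1+k),
          fderiv ℝ (c s α) m.1 (Pi.single ν 1)
            * rDet (Function.update (midx s) α ν) (fun b => (w b).1) := by
        apply Finset.sum_congr rfl
        intro s _
        apply Finset.sum_congr rfl
        intro α _
        apply Finset.sum_congr rfl
        intro ν _
        rw [← Finset.mul_sum]
        congr 1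
        rw [show (∑ i : Fin (d+1), (-1:ℝ)^(i:ℕ) * (w i).1 ν
            * rDet (midx s) (Fin.cons (Pi.single (midx s α) 1) ((fun b => (w b).1) ∘ i.succAbove)))
          = ∑ β : Fin (d+1), if midx s β = midx s α
              then rDet (Function.update (midx s) β ν) (fun b => (w b).1) else 0
          from star_identity (midx s) ν (midx s α) (fun b => (w b).1)]
        exact hcol s α ν
    _ = ∑ s : MultiIdx (d+1+k) (d+1), (∑ α : Fin (d+1), ∑ ν : Fin (d+1+k),
          fderiv ℝ (extC c (Function.update (midx s) α ν) α) m.1 (Pi.single (midx s α) 1))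
            * rDet (midx s) (fun b => (w b).1) := phi_identity c hc m.1 (fun b => (w b).1)
    _ = - ∑ s : MultiIdx (d+1+k) (d+1),
          (- ∑ α : Fin (d + 1), ∑ ν : Fin (d + 1 + k),
            fderiv ℝ (extC c (Function.update (fun a => midx s a) α ν) α) m.1
              (Pi.single (midx s α) 1)) * rDet (midx s) (fun b => (w b).1) := by
        rw [← Finset.sum_neg_distrib]
        apply Finset.sum_congr rfl
        intro s _
        ring

end Aux9

section Aux10
open Finset Equiv Matrix

variable {d k : ℕ}

lemma col_expand (ξf : Fin (d + 1 + k) → (Fin (d + 1 + k) → ℝ) → ℝ)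
    (m1 : Fin (d+1+k) → ℝ) (t : Fin (d+1) → Fin (d+1+k)) (y : Fin (d+1+k) → ℝ)
    (v' : Fin d → Fin (d+1+k) → ℝ) :
    rDet t (Fin.cons (fun ρ => fderiv ℝ (ξf ρ) m1 y) v')
      = ∑ ν : Fin (d+1+k), ∑ μ : Fin (d+1+k),
          y ν * fderiv ℝ (ξf μ) m1 (Pi.single ν 1) * rDet t (Fin.cons (Pi.single μ 1) v') := by
  symm
  calc ∑ ν : Fin (d+1+k), ∑ μ : Fin (d+1+k),
          y ν * fderiv ℝ (ξf μ) m1 (Pi.single ν 1) * rDet t (Fin.cons (Pi.single μ 1) v')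
      = ∑ ν : Fin (d+1+k), ∑ μ : Fin (d+1+k), ∑ a : Fin (d+1),
          y ν * fderiv ℝ (ξf μ) m1 (Pi.single ν 1)
            * ((-1:ℝ)^(a:ℕ) * (Pi.single μ 1 : Fin (d+1+k) → ℝ) (t a) * rDet (t ∘ a.succAbove) v') := by
        apply Finset.sum_congr rfl
        intro ν _
        apply Finset.sum_congr rfl
        intro μ _
        rw [rDet_cons_col, Finset.mul_sum]
    _ = ∑ a : Fin (d+1), ∑ ν : Fin (d+1+k), ∑ μ : Fin (d+1+k),
          y ν * fderiv ℝ (ξf μ) m1 (Pi.single ν 1)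
            * ((-1:ℝ)^(a:ℕ) * (Pi.single μ 1 : Fin (d+1+k) → ℝ) (t a) * rDet (t ∘ a.succAbove) v') := by
        rw [show (∑ ν : Fin (d+1+k), ∑ μ : Fin (d+1+k), ∑ a : Fin (d+1),
            y ν * fderiv ℝ (ξf μ) m1 (Pi.single ν 1)
              * ((-1:ℝ)^(a:ℕ) * (Pi.single μ 1 : Fin (d+1+k) → ℝ) (t a) * rDet (t ∘ a.succAbove) v'))
          = ∑ ν : Fin (d+1+k), ∑ a : Fin (d+1), ∑ μ : Fin (d+1+k),
            y ν * fderiv ℝ (ξf μ) m1 (Pi.single ν 1)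
              * ((-1:ℝ)^(a:ℕ) * (Pi.single μ 1 : Fin (d+1+k) → ℝ) (t a) * rDet (t ∘ a.succAbove) v')
          from Finset.sum_congr rfl (fun ν _ => Finset.sum_comm)]
        exact Finset.sum_comm
    _ = ∑ a : Fin (d+1), ∑ ν : Fin (d+1+k),
          y ν * fderiv ℝ (ξf (t a)) m1 (Pi.single ν 1) * ((-1:ℝ)^(a:ℕ) * rDet (t ∘ a.succAbove) v') := by
        apply Finset.sum_congr rfl
        intro a _
        apply Finset.sum_congr rfl
        intro ν _
        rw [show (∑ μ : Fin (d+1+k), y ν * fderiv ℝ (ξf μ) m1 (Pi.single ν 1)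
            * ((-1:ℝ)^(a:ℕ) * (Pi.single μ 1 : Fin (d+1+k) → ℝ) (t a) * rDet (t ∘ a.succAbove) v'))
          = ∑ μ : Fin (d+1+k), (if t a = μ
              then y ν * fderiv ℝ (ξf μ) m1 (Pi.single ν 1) * ((-1:ℝ)^(a:ℕ) * rDet (t ∘ a.succAbove) v')
              else 0) from Finset.sum_congr rfl (fun μ _ => by
            rw [Pi.single_apply]
            by_cases h : t a = μ
            · rw [if_pos h, if_pos h]; ring
            · rw [if_neg h, if_neg h]; ring)]
        rw [Finset.sum_ite_eq Finset.univ (t a)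
          (fun μ => y ν * fderiv ℝ (ξf μ) m1 (Pi.single ν 1) * ((-1:ℝ)^(a:ℕ) * rDet (t ∘ a.succAbove) v'))]
        rw [if_pos (Finset.mem_univ (t a))]
    _ = ∑ a : Fin (d+1), (-1:ℝ)^(a:ℕ) * fderiv ℝ (ξf (t a)) m1 y * rDet (t ∘ a.succAbove) v' := by
        apply Finset.sum_congr rfl
        intro a _
        rw [clm_basis (fderiv ℝ (ξf (t a)) m1) y, Finset.mul_sum, Finset.sum_mul]
        apply Finset.sum_congr rfl
        intro ν _
        ring
    _ = rDet t (Fin.cons (fun ρ => fderiv ℝ (ξf ρ) m1 y) v') :=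
        (rDet_cons_col t (fun ρ => fderiv ℝ (ξf ρ) m1 y) v').symm

lemma XiP_eq (ξf : Fin (d + 1 + k) → (Fin (d + 1 + k) → ℝ) → ℝ) (m : Phase (d+1) k) :
    XiP d k ξf m = ((fun ρ => ξf ρ m.1),
      fun s => - ∑ μ : Fin (d+1+k), ∑ ν : Fin (d+1+k),
        fderiv ℝ (ξf μ) m.1 (Pi.single ν 1) * (PiVF (d + 1) k ν μ m).2 s) := by
  rw [XiP]
  refine Prod.ext ?_ ?_
  · rw [Prod.fst_sub, Prod.fst_sum]
    rw [Finset.sum_congr rfl (fun μ _ => Prod.fst_sum (f := fun ν =>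
      (fderiv ℝ (ξf μ) m.1 (Pi.single ν 1)) • PiVF (d + 1) k ν μ m))]
    have hz : ∀ μ ∈ (Finset.univ : Finset (Fin (d+1+k))), (∑ ν : Fin (d+1+k),
        ((fderiv ℝ (ξf μ) m.1 (Pi.single ν 1)) • PiVF (d + 1) k ν μ m).1)
        = (0 : Fin (d+1+k) → ℝ) := by
      intro μ _
      apply Finset.sum_eq_zero
      intro ν _
      rw [Prod.smul_fst]
      rw [show (PiVF (d + 1) k ν μ m).1 = (0 : Fin (d+1+k) → ℝ) from rfl]
      simp
    rw [Finset.sum_congr rfl hz, Finset.sum_const, smul_zero, sub_zero]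
    rfl
  · rw [Prod.snd_sub, Prod.snd_sum]
    rw [Finset.sum_congr rfl (fun μ _ => Prod.snd_sum (f := fun ν =>
      (fderiv ℝ (ξf μ) m.1 (Pi.single ν 1)) • PiVF (d + 1) k ν μ m))]
    funext s
    simp only [Pi.sub_apply, Finset.sum_apply, Pi.smul_apply, Prod.smul_snd, smul_eq_mul]
    rw [show (qVF (d+1) k ξf m).2 s = 0 from rfl]
    simp

lemma part2 (ξf : Fin (d + 1 + k) → (Fin (d + 1 + k) → ℝ) → ℝ)
    (hξf : ∀ μ, ContDiff ℝ (⊤ : ℕ∞) (ξf μ)) (m : Phase (d + 1) k)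
    (w : Fin (d + 1) → Phase (d + 1) k) :
    dEval (Pxi d k ξf) m w = - OmegaEval (d + 1) k (Fin.cons (XiP d k ξf m) w) := by
  classical
  set TA : ℝ := ∑ i : Fin (d+1), (-1:ℝ)^(i:ℕ) * ∑ s : MultiIdx (d+1+k) (d+1),
    (w i).2 s * rDet (midx s) (Fin.cons (fun ρ => ξf ρ m.1) (fun j : Fin d => (w (i.succAbove j)).1))
    with hTA
  set TB : ℝ := ∑ i : Fin (d+1), (-1:ℝ)^(i:ℕ) * ∑ s : MultiIdx (d+1+k) (d+1),
    m.2 s * rDet (midx s)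
      (Fin.cons (fun ρ => fderiv ℝ (ξf ρ) m.1 (w i).1) (fun j : Fin d => (w (i.succAbove j)).1))
    with hTB
  set TC : ℝ := ∑ s : MultiIdx (d+1+k) (d+1), (∑ μ : Fin (d+1+k), ∑ ν : Fin (d+1+k),
    fderiv ℝ (ξf μ) m.1 (Pi.single ν 1) * (PiVF (d + 1) k ν μ m).2 s)
      * rDet (midx s) (fun b => (w b).1) with hTC
  have hL : dEval (Pxi d k ξf) m w = TA + TB := by
    rw [dEval]
    calc ∑ i : Fin (d+1), (-1:ℝ)^(i:ℕ)
          * fderiv ℝ (fun m' => Pxi d k ξf m' (w ∘ i.succAbove)) m (w i)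
        = ∑ i : Fin (d+1), ((-1:ℝ)^(i:ℕ) * ∑ s : MultiIdx (d+1+k) (d+1),
            (w i).2 s * rDet (midx s) (Fin.cons (fun ρ => ξf ρ m.1) (fun j : Fin d => (w (i.succAbove j)).1))
          + (-1:ℝ)^(i:ℕ) * ∑ s : MultiIdx (d+1+k) (d+1),
            m.2 s * rDet (midx s)
              (Fin.cons (fun ρ => fderiv ℝ (ξf ρ) m.1 (w i).1) (fun j : Fin d => (w (i.succAbove j)).1))) := by
          apply Finset.sum_congr rfl
          intro i _
          rw [show fderiv ℝ (fun m' => Pxi d k ξf m' (w ∘ i.succAbove)) m (w i)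
              = ∑ s : MultiIdx (d+1+k) (d+1),
                ((w i).2 s * rDet (midx s) (Fin.cons (fun ρ => ξf ρ m.1) (fun j : Fin d => (w (i.succAbove j)).1))
                + m.2 s * rDet (midx s)
                  (Fin.cons (fun ρ => fderiv ℝ (ξf ρ) m.1 (w i).1) (fun j : Fin d => (w (i.succAbove j)).1)))
            from fderiv_Pxi ξf hξf (w ∘ i.succAbove) m (w i)]
          rw [Finset.sum_add_distrib, mul_add]
      _ = TA + TB := by rw [hTA, hTB, Finset.sum_add_distrib]
  have hR : OmegaEval (d + 1) k (Fin.cons (XiP d k ξf m) w) = -TA + (-TC) := by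
    rw [XiP_eq ξf m, omega_split]
    congr 1
    · rw [omega_q, hTA]
    · rw [omega_p, hTC, ← Finset.sum_neg_distrib]
      apply Finset.sum_congr rfl
      intro s _
      show (- ∑ μ : Fin (d+1+k), ∑ ν : Fin (d+1+k),
          fderiv ℝ (ξf μ) m.1 (Pi.single ν 1) * (PiVF (d + 1) k ν μ m).2 s)
            * rDet (midx s) (fun b => (w b).1)
        = -((∑ μ : Fin (d+1+k), ∑ ν : Fin (d+1+k),
          fderiv ℝ (ξf μ) m.1 (Pi.single ν 1) * (PiVF (d + 1) k ν μ m).2 s)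
            * rDet (midx s) (fun b => (w b).1))
      ring
  have hBC : TB = TC := by
    rw [hTB, hTC]
    calc ∑ i : Fin (d+1), (-1:ℝ)^(i:ℕ) * ∑ s : MultiIdx (d+1+k) (d+1),
          m.2 s * rDet (midx s)
            (Fin.cons (fun ρ => fderiv ℝ (ξf ρ) m.1 (w i).1) (fun j : Fin d => (w (i.succAbove j)).1))
        = ∑ i : Fin (d+1), ∑ s : MultiIdx (d+1+k) (d+1), ∑ ν : Fin (d+1+k), ∑ μ : Fin (d+1+k),
            fderiv ℝ (ξf μ) m.1 (Pi.single ν 1)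
              * (m.2 s * ((-1:ℝ)^(i:ℕ) * (w i).1 ν
                * rDet (midx s) (Fin.cons (Pi.single μ 1) (fun j : Fin d => (w (i.succAbove j)).1)))) := by
          apply Finset.sum_congr rfl
          intro i _
          rw [Finset.mul_sum]
          apply Finset.sum_congr rfl
          intro s _
          rw [col_expand ξf m.1 (midx s) (w i).1 (fun j : Fin d => (w (i.succAbove j)).1)]
          rw [Finset.mul_sum, Finset.mul_sum]
          apply Finset.sum_congr rfl
          intro ν _
          rw [Finset.mul_sum, Finset.mul_sum]
          apply Finset.sum_congr rfl
          intro μ _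
          ring
      _ = ∑ s : MultiIdx (d+1+k) (d+1), ∑ i : Fin (d+1), ∑ ν : Fin (d+1+k), ∑ μ : Fin (d+1+k),
            fderiv ℝ (ξf μ) m.1 (Pi.single ν 1)
              * (m.2 s * ((-1:ℝ)^(i:ℕ) * (w i).1 ν
                * rDet (midx s) (Fin.cons (Pi.single μ 1) (fun j : Fin d => (w (i.succAbove j)).1)))) :=
          Finset.sum_comm
      _ = ∑ s : MultiIdx (d+1+k) (d+1), ∑ ν : Fin (d+1+k), ∑ i : Fin (d+1), ∑ μ : Fin (d+1+k),
            fderiv ℝ (ξf μ) m.1 (Pi.single ν 1)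
              * (m.2 s * ((-1:ℝ)^(i:ℕ) * (w i).1 ν
                * rDet (midx s) (Fin.cons (Pi.single μ 1) (fun j : Fin d => (w (i.succAbove j)).1)))) :=
          Finset.sum_congr rfl (fun s _ => Finset.sum_comm)
      _ = ∑ s : MultiIdx (d+1+k) (d+1), ∑ ν : Fin (d+1+k), ∑ μ : Fin (d+1+k), ∑ i : Fin (d+1),
            fderiv ℝ (ξf μ) m.1 (Pi.single ν 1)
              * (m.2 s * ((-1:ℝ)^(i:ℕ) * (w i).1 ν
                * rDet (midx s) (Fin.cons (Pi.single μ 1) (fun j : Fin d => (w (i.succAbove j)).1)))) :=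
          Finset.sum_congr rfl (fun s _ => Finset.sum_congr rfl (fun ν _ => Finset.sum_comm))
      _ = ∑ ν : Fin (d+1+k), ∑ s : MultiIdx (d+1+k) (d+1), ∑ μ : Fin (d+1+k), ∑ i : Fin (d+1),
            fderiv ℝ (ξf μ) m.1 (Pi.single ν 1)
              * (m.2 s * ((-1:ℝ)^(i:ℕ) * (w i).1 ν
                * rDet (midx s) (Fin.cons (Pi.single μ 1) (fun j : Fin d => (w (i.succAbove j)).1)))) :=
          Finset.sum_comm
      _ = ∑ ν : Fin (d+1+k), ∑ μ : Fin (d+1+k), ∑ s : MultiIdx (d+1+k) (d+1), ∑ i : Fin (d+1),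
            fderiv ℝ (ξf μ) m.1 (Pi.single ν 1)
              * (m.2 s * ((-1:ℝ)^(i:ℕ) * (w i).1 ν
                * rDet (midx s) (Fin.cons (Pi.single μ 1) (fun j : Fin d => (w (i.succAbove j)).1)))) :=
          Finset.sum_congr rfl (fun ν _ => Finset.sum_comm)
      _ = ∑ μ : Fin (d+1+k), ∑ ν : Fin (d+1+k), ∑ s : MultiIdx (d+1+k) (d+1), ∑ i : Fin (d+1),
            fderiv ℝ (ξf μ) m.1 (Pi.single ν 1)
              * (m.2 s * ((-1:ℝ)^(i:ℕ) * (w i).1 ν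
                * rDet (midx s) (Fin.cons (Pi.single μ 1) (fun j : Fin d => (w (i.succAbove j)).1)))) :=
          Finset.sum_comm
      _ = ∑ μ : Fin (d+1+k), ∑ ν : Fin (d+1+k),
            fderiv ℝ (ξf μ) m.1 (Pi.single ν 1)
              * ∑ s : MultiIdx (d+1+k) (d+1), m.2 s
                * ∑ i : Fin (d+1), (-1:ℝ)^(i:ℕ) * (w i).1 ν
                  * rDet (midx s) (Fin.cons (Pi.single μ 1) (fun j : Fin d => (w (i.succAbove j)).1)) := by
          apply Finset.sum_congr rfl
          intro μ _
          apply Finset.sum_congr rfl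
          intro ν _
          rw [Finset.mul_sum]
          apply Finset.sum_congr rfl
          intro s _
          rw [Finset.mul_sum, Finset.mul_sum]
      _ = ∑ μ : Fin (d+1+k), ∑ ν : Fin (d+1+k),
            fderiv ℝ (ξf μ) m.1 (Pi.single ν 1)
              * ∑ s : MultiIdx (d+1+k) (d+1), m.2 s
                * ∑ α : Fin (d+1), (if midx s α = μ
                    then rDet (Function.update (midx s) α ν) (fun b => (w b).1) else 0) := by
          apply Finset.sum_congr rfl
          intro μ _
          apply Finset.sum_congr rfl
          intro ν _
          congr 1
          apply Finset.sum_congr rfl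
          intro s _
          congr 1
          exact star_identity (midx s) ν μ (fun b => (w b).1)
      _ = ∑ μ : Fin (d+1+k), ∑ ν : Fin (d+1+k),
            fderiv ℝ (ξf μ) m.1 (Pi.single ν 1)
              * ∑ s : MultiIdx (d+1+k) (d+1), (PiVF (d + 1) k ν μ m).2 s
                  * rDet (midx s) (fun b => (w b).1) := by
          apply Finset.sum_congr rfl
          intro μ _
          apply Finset.sum_congr rfl
          intro ν _
          congr 1
          exact diamond m.2 (fun b => (w b).1) ν μ
      _ = ∑ μ : Fin (d+1+k), ∑ ν : Fin (d+1+k), ∑ s : MultiIdx (d+1+k) (d+1),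
            fderiv ℝ (ξf μ) m.1 (Pi.single ν 1)
              * ((PiVF (d + 1) k ν μ m).2 s * rDet (midx s) (fun b => (w b).1)) := by
          apply Finset.sum_congr rfl
          intro μ _
          apply Finset.sum_congr rfl
          intro ν _
          rw [Finset.mul_sum]
      _ = ∑ μ : Fin (d+1+k), ∑ s : MultiIdx (d+1+k) (d+1), ∑ ν : Fin (d+1+k),
            fderiv ℝ (ξf μ) m.1 (Pi.single ν 1)
              * ((PiVF (d + 1) k ν μ m).2 s * rDet (midx s) (fun b => (w b).1)) :=
          Finset.sum_congr rfl (fun μ _ => Finset.sum_comm)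
      _ = ∑ s : MultiIdx (d+1+k) (d+1), ∑ μ : Fin (d+1+k), ∑ ν : Fin (d+1+k),
            fderiv ℝ (ξf μ) m.1 (Pi.single ν 1)
              * ((PiVF (d + 1) k ν μ m).2 s * rDet (midx s) (fun b => (w b).1)) :=
          Finset.sum_comm
      _ = ∑ s : MultiIdx (d+1+k) (d+1), (∑ μ : Fin (d+1+k), ∑ ν : Fin (d+1+k),
            fderiv ℝ (ξf μ) m.1 (Pi.single ν 1) * (PiVF (d + 1) k ν μ m).2 s)
              * rDet (midx s) (fun b => (w b).1) := by
          apply Finset.sum_congr rfl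
          intro s _
          rw [Finset.sum_mul]
          apply Finset.sum_congr rfl
          intro μ _
          rw [Finset.sum_mul]
          apply Finset.sum_congr rfl
          intro ν _
          ring
  rw [hL, hR, hBC]
  ring

end Aux10


/-- Every generalized position form `Q^ζ = ζ ⨼ Ω` and every generalized
momentum form `P_ξ = ξ ⨼ θ` (coefficients depending on `q` only) belongs to `𝔓^{n−1}M`,
i.e. `dQ^ζ = −Ξ(Q^ζ) ⨼ Ω` and `dP_ξ = −Ξ(P_ξ) ⨼ Ω` with the explicit pataplectic vector
fields `Ξ(Q^ζ)`, `Ξ(P_ξ) = ξ − Σ (∂ξ^μ/∂q^ν) Π^ν_μ`; moreover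
`dq^ν ∧ (∂/∂q^μ ⨼ θ) = Π^ν_μ ⨼ Ω`.  Here `n = d+1 ≥ 1`. -/
theorem stmt12 (d k : ℕ)
    (c : MultiIdx (d + 1 + k) (d + 1) → Fin (d + 1) → (Fin (d + 1 + k) → ℝ) → ℝ)
    (hc : ∀ s α, ContDiff ℝ (⊤ : ℕ∞) (c s α))
    (ξf : Fin (d + 1 + k) → (Fin (d + 1 + k) → ℝ) → ℝ)
    (hξf : ∀ μ, ContDiff ℝ (⊤ : ℕ∞) (ξf μ)) :
    -- Q^ζ ∈ 𝔓^{n−1}M with the stated Ξ(Q^ζ)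
    (∀ (m : Phase (d + 1) k) (w : Fin (d + 1) → Phase (d + 1) k),
      dEval (Qzeta d k c) m w = - OmegaEval (d + 1) k (Fin.cons (XiQ d k c m) w)) ∧
    -- P_ξ ∈ 𝔓^{n−1}M with Ξ(P_ξ) = ξ − Σ (∂ξ^μ/∂q^ν) Π^ν_μ
    (∀ (m : Phase (d + 1) k) (w : Fin (d + 1) → Phase (d + 1) k),
      dEval (Pxi d k ξf) m w = - OmegaEval (d + 1) k (Fin.cons (XiP d k ξf m) w)) ∧
    -- dq^ν ∧ (∂/∂q^μ ⨼ θ) = Π^ν_μ ⨼ Ω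
    (∀ (ν μ : Fin (d + 1 + k)) (m : Phase (d + 1) k)
        (w : Fin (d + 1) → Phase (d + 1) k),
      (∑ i : Fin (d + 1), (-1 : ℝ) ^ (i : ℕ) * (w i).1 ν *
          thetaEval (d + 1) k m (Fin.cons (eQ (d + 1) k μ) (w ∘ i.succAbove)))
        = OmegaEval (d + 1) k (Fin.cons (PiVF (d + 1) k ν μ m) w)) := by
  exact ⟨fun m w => part1 c hc m w, fun m w => part2 ξf hξf m w, fun ν μ m w => part3 ν μ m w⟩
end
end

section
/- For any vector field ξ = Σ_μ ξ^μ(q) ∂/∂q^μ on ℝ^{n+k} (coefficients depending only on q), the following identity of n-forms on the domain of H holds: {Hω, P_ξ} = L_{Ξ(P_ξ)}(θ − Hω) + d( ξ ⨼ (Hω) ), where {Hω, P_ξ} := −Ξ(P_ξ)⨼d(Hω) and L denotes the Lie derivative. -/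
open scoped BigOperators

noncomputable section

section Aux

variable {E : Type*} [NormedAddCommGroup E] [NormedSpace ℝ E]

lemma det_differentiableAt {N : ℕ} {M : E → Matrix (Fin N) (Fin N) ℝ} {x : E}
    (h : ∀ i j, DifferentiableAt ℝ (fun y => M y i j) x) :
    DifferentiableAt ℝ (fun y => (M y).det) x := by
  simp only [Matrix.det_apply']
  apply DifferentiableAt.fun_sum
  intro σ _
  exact ((HasFDerivAt.finset_prod
    (fun i (_ : i ∈ Finset.univ) => (h (σ i) i).hasFDerivAt)).differentiableAt).const_mul _

lemma dEval_sub {p : ℕ} (φ ψ : E → (Fin p → E) → ℝ) (m : E) (w : Fin (p + 1) → E)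
    (hφ : ∀ i : Fin (p + 1), DifferentiableAt ℝ (fun m' => φ m' (w ∘ i.succAbove)) m)
    (hψ : ∀ i : Fin (p + 1), DifferentiableAt ℝ (fun m' => ψ m' (w ∘ i.succAbove)) m) :
    dEval (fun m' v => φ m' v - ψ m' v) m w = dEval φ m w - dEval ψ m w := by
  unfold dEval
  rw [← Finset.sum_sub_distrib]
  apply Finset.sum_congr rfl
  intro i _
  rw [fderiv_fun_sub (hφ i) (hψ i)]
  simp [mul_sub]

end Aux

/-- The derivative of `θ` in `m` (for fixed arguments `v`). -/
lemma theta_hasFDerivAt (n k : ℕ) (v : Fin n → Phase n k) (m : Phase n k) :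
    HasFDerivAt (fun m' => thetaEval n k m' v)
      (∑ s : MultiIdx (n + k) n,
        Matrix.det (Matrix.of fun a b : Fin n => (v b).1 (midx s a)) •
          ((ContinuousLinearMap.proj s).comp
            (ContinuousLinearMap.snd ℝ (Fin (n + k) → ℝ) (MultiIdx (n + k) n → ℝ)))) m := by
  unfold thetaEval
  apply HasFDerivAt.fun_sum
  intro s _
  exact HasFDerivAt.mul_const
    (((ContinuousLinearMap.proj s).comp
      (ContinuousLinearMap.snd ℝ (Fin (n + k) → ℝ) (MultiIdx (n + k) n → ℝ))).hasFDerivAt) _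

lemma fderiv_theta_apply (n k : ℕ) (v : Fin n → Phase n k) (m u : Phase n k) :
    fderiv ℝ (fun m' => thetaEval n k m' v) m u
      = ∑ s : MultiIdx (n + k) n,
          Matrix.det (Matrix.of fun a b : Fin n => (v b).1 (midx s a)) * u.2 s := by
  rw [(theta_hasFDerivAt n k v m).fderiv]
  simp [ContinuousLinearMap.sum_apply]

/-- `dθ = Ω`. -/
lemma dTheta (n k : ℕ) (m : Phase n k) (w : Fin (n + 1) → Phase n k) :
    dEval (fun m' (v : Fin n → Phase n k) => thetaEval n k m' v) m w
      = OmegaEval n k w := by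
  unfold dEval OmegaEval
  have h1 : ∀ i : Fin (n + 1),
      fderiv ℝ (fun m' => thetaEval n k m' (w ∘ i.succAbove)) m (w i)
        = ∑ s : MultiIdx (n + k) n,
            Matrix.det (Matrix.of fun a b : Fin n => ((w ∘ i.succAbove) b).1 (midx s a))
              * (w i).2 s :=
    fun i => fderiv_theta_apply n k (w ∘ i.succAbove) m (w i)
  calc
    ∑ i : Fin (n + 1), (-1 : ℝ) ^ (i : ℕ) *
        fderiv ℝ (fun m' => thetaEval n k m' (w ∘ i.succAbove)) m (w i)
      = ∑ i : Fin (n + 1), ∑ s : MultiIdx (n + k) n, (-1 : ℝ) ^ (i : ℕ) *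
          (Matrix.det (Matrix.of fun a b : Fin n => ((w ∘ i.succAbove) b).1 (midx s a))
            * (w i).2 s) := by
        refine Finset.sum_congr rfl fun i _ => ?_
        rw [h1 i, Finset.mul_sum]
    _ = ∑ s : MultiIdx (n + k) n, ∑ i : Fin (n + 1), (-1 : ℝ) ^ (i : ℕ) *
          (Matrix.det (Matrix.of fun a b : Fin n => ((w ∘ i.succAbove) b).1 (midx s a))
            * (w i).2 s) := Finset.sum_comm
    _ = _ := by
        refine Finset.sum_congr rfl fun s _ => ?_
        rw [Matrix.det_succ_row_zero]
        refine (Finset.sum_congr rfl fun j _ => ?_).symm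
        have hsub : (Matrix.of fun a b : Fin (n + 1) =>
              (Fin.cons ((w b).2 s) (fun j' : Fin n => (w b).1 (midx s j')) : Fin (n+1) → ℝ) a
            ).submatrix Fin.succ j.succAbove
            = Matrix.of fun a b : Fin n => ((w ∘ j.succAbove) b).1 (midx s a) := by
          ext a b
          simp [Matrix.submatrix_apply, Matrix.of_apply]
        rw [hsub]
        simp [Matrix.of_apply]
        ring

lemma thetaEval_congr (n k : ℕ) (m : Phase n k) {w w' : Fin n → Phase n k}
    (h : ∀ b, (w b).1 = (w' b).1) : thetaEval n k m w = thetaEval n k m w' := by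
  unfold thetaEval
  refine Finset.sum_congr rfl fun s _ => ?_
  have : (fun a b : Fin n => (w b).1 (midx s a)) = fun a b => (w' b).1 (midx s a) := by
    funext a b; rw [h b]
  rw [this]

lemma volEval_congr (n k : ℕ) {w w' : Fin n → Phase n k}
    (h : ∀ b, (w b).1 = (w' b).1) : volEval n k w = volEval n k w' := by
  unfold volEval
  have : (fun a b : Fin n => (w b).1 (Fin.castAdd k a))
      = fun a b => (w' b).1 (Fin.castAdd k a) := by
    funext a b; rw [h b]
  rw [this]

/-- For the generalized momentum form `P_ξ = ξ ⨼ θ` of a vector field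
`ξ = Σ ξ^μ(q) ∂/∂q^μ`, with associated pataplectic vector field `Ξ(P_ξ)`
(`= ξ − Σ (∂ξ^μ/∂q^ν) Π^ν_μ`; it is characterized by having `ξ` as its `q`-component and
satisfying `dP_ξ = −Ξ(P_ξ) ⨼ Ω`), one has the identity of `n`-forms
`{Hω, P_ξ} = L_{Ξ(P_ξ)}(θ − Hω) + d(ξ ⨼ (Hω))`, where `{Hω,P_ξ} := −Ξ(P_ξ)⨼d(Hω)`
and the Lie derivative is computed by Cartan's formula.  Here `n = d+1 ≥ 1`. -/
theorem stmt16 (d k : ℕ)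
    (H : Phase (d + 1) k → ℝ) (hH : ContDiff ℝ (⊤ : ℕ∞) H)
    (ξf : Fin (d + 1 + k) → (Fin (d + 1 + k) → ℝ) → ℝ)
    (hξf : ∀ μ, ContDiff ℝ (⊤ : ℕ∞) (ξf μ))
    (ξP : Phase (d + 1) k → Phase (d + 1) k) (hξP : ContDiff ℝ (⊤ : ℕ∞) ξP)
    -- Ξ(P_ξ) = ξ − Σ (∂ξ^μ/∂q^ν) Π^ν_μ: its q-part is ξ (the Π's only have p-components)…
    (hq : ∀ m : Phase (d + 1) k, (ξP m).1 = fun μ => ξf μ m.1)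
    -- … and it satisfies the defining property dP_ξ = −Ξ(P_ξ) ⨼ Ω of 𝔓^{n−1}M.
    (hdef : ∀ (m : Phase (d + 1) k) (w : Fin (d + 1) → Phase (d + 1) k),
      dEval (fun m' (v : Fin d → Phase (d + 1) k) =>
          thetaEval (d + 1) k m' (Fin.cons (qVF (d + 1) k ξf m') v)) m w
        = - OmegaEval (d + 1) k (Fin.cons (ξP m) w)) :
    ∀ (m : Phase (d + 1) k) (w : Fin (d + 1) → Phase (d + 1) k),
      -- {Hω, P_ξ}  =  −Ξ(P_ξ) ⨼ d(Hω)
      - dEval (fun m' (v : Fin (d + 1) → Phase (d + 1) k) => H m' * volEval (d + 1) k v)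
          m (Fin.cons (ξP m) w)
      =
      -- Ξ(P_ξ) ⨼ d(θ − Hω)
      (dEval (fun m' (v : Fin (d + 1) → Phase (d + 1) k) =>
          thetaEval (d + 1) k m' v - H m' * volEval (d + 1) k v) m (Fin.cons (ξP m) w)
      -- + d(Ξ(P_ξ) ⨼ (θ − Hω))
      + dEval (fun m' (v : Fin d → Phase (d + 1) k) =>
          thetaEval (d + 1) k m' (Fin.cons (ξP m') v)
            - H m' * volEval (d + 1) k (Fin.cons (ξP m') v)) m w)
      -- + d(ξ ⨼ (Hω))
      + dEval (fun m' (v : Fin d → Phase (d + 1) k) =>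
          H m' * volEval (d + 1) k (Fin.cons (qVF (d + 1) k ξf m') v)) m w := by
  intro m w
  have hHd : Differentiable ℝ H := hH.differentiable (by simp)
  have hξPd : Differentiable ℝ ξP := hξP.differentiable (by simp)
  -- differentiability of the q-components of ξP
  have hcomp : ∀ μ, Differentiable ℝ (fun m' : Phase (d + 1) k => (ξP m').1 μ) := by
    intro μ
    exact (differentiable_pi.mp hξPd.fst) μ
  have hξfd : ∀ μ, Differentiable ℝ (fun m' : Phase (d + 1) k => ξf μ m'.1) :=
    fun μ => ((hξf μ).differentiable (by simp)).comp differentiable_fst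
  -- entries of matrices built from `Fin.cons (ξP m') v` are differentiable in `m'`
  have colξ : ∀ (v : Fin d → Phase (d + 1) k) (b : Fin (d + 1)) (μ : Fin (d + 1 + k))
      (x : Phase (d + 1) k),
      DifferentiableAt ℝ (fun m' => ((Fin.cons (ξP m') v : Fin (d+1) → Phase (d+1) k) b).1 μ) x := by
    intro v b μ x
    refine Fin.cases ?_ (fun j => ?_) b
    · simpa using (hcomp μ x)
    · simp only [Fin.cons_succ]; exact differentiableAt_const _
  have colq : ∀ (v : Fin d → Phase (d + 1) k) (b : Fin (d + 1)) (μ : Fin (d + 1 + k))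
      (x : Phase (d + 1) k),
      DifferentiableAt ℝ (fun m' => ((Fin.cons (qVF (d + 1) k ξf m') v : Fin (d+1) → Phase (d+1) k) b).1 μ) x := by
    intro v b μ x
    refine Fin.cases ?_ (fun j => ?_) b
    · simpa [qVF] using (hξfd μ x)
    · simp only [Fin.cons_succ]; exact differentiableAt_const _
  -- differentiability of the various coefficient functions
  have hθc : ∀ (v : Fin (d + 1) → Phase (d + 1) k) (x : Phase (d + 1) k),
      DifferentiableAt ℝ (fun m' => thetaEval (d + 1) k m' v) x :=
    fun v x => (theta_hasFDerivAt (d + 1) k v x).differentiableAt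
  have hHω : ∀ (v : Fin (d + 1) → Phase (d + 1) k) (x : Phase (d + 1) k),
      DifferentiableAt ℝ (fun m' => H m' * volEval (d + 1) k v) x :=
    fun v x => (hHd x).mul_const _
  have hθcons : ∀ (v : Fin d → Phase (d + 1) k) (x : Phase (d + 1) k),
      DifferentiableAt ℝ (fun m' => thetaEval (d + 1) k m' (Fin.cons (ξP m') v)) x := by
    intro v x
    unfold thetaEval
    apply DifferentiableAt.fun_sum
    intro s _
    apply DifferentiableAt.mul
    · exact ((ContinuousLinearMap.proj s).comp
        (ContinuousLinearMap.snd ℝ (Fin (d + 1 + k) → ℝ)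
          (MultiIdx (d + 1 + k) (d + 1) → ℝ))).differentiableAt
    · exact det_differentiableAt (fun a b => colξ v b (midx s a) x)
  have hvolξ : ∀ (v : Fin d → Phase (d + 1) k) (x : Phase (d + 1) k),
      DifferentiableAt ℝ (fun m' => H m' * volEval (d + 1) k (Fin.cons (ξP m') v)) x := by
    intro v x
    exact (hHd x).mul (det_differentiableAt (fun a b => colξ v b (Fin.castAdd k a) x))
  -- split the two `dEval` of differences
  rw [dEval_sub (fun m' (v : Fin (d + 1) → Phase (d + 1) k) => thetaEval (d + 1) k m' v)
      (fun m' (v : Fin (d + 1) → Phase (d + 1) k) => H m' * volEval (d + 1) k v)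
      m (Fin.cons (ξP m) w)
      (fun i => hθc _ m) (fun i => hHω _ m)]
  rw [dEval_sub (fun m' (v : Fin d → Phase (d + 1) k) =>
        thetaEval (d + 1) k m' (Fin.cons (ξP m') v))
      (fun m' (v : Fin d → Phase (d + 1) k) =>
        H m' * volEval (d + 1) k (Fin.cons (ξP m') v))
      m w (fun i => hθcons _ m) (fun i => hvolξ _ m)]
  -- replace `ξP` by `qVF` inside θ and ω (they only see q-components)
  have hcons1 : ∀ (m' : Phase (d + 1) k) (v : Fin d → Phase (d + 1) k) (b : Fin (d + 1)),
      ((Fin.cons (ξP m') v : Fin (d + 1) → Phase (d + 1) k) b).1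
        = ((Fin.cons (qVF (d + 1) k ξf m') v : Fin (d + 1) → Phase (d + 1) k) b).1 := by
    intro m' v b
    refine Fin.cases ?_ (fun j => ?_) b
    · simp [Fin.cons_zero, qVF, hq m']
    · rfl
  have hfun1 : (fun (m' : Phase (d + 1) k) (v : Fin d → Phase (d + 1) k) =>
        thetaEval (d + 1) k m' (Fin.cons (ξP m') v))
      = (fun m' v => thetaEval (d + 1) k m' (Fin.cons (qVF (d + 1) k ξf m') v)) := by
    funext m' v
    exact thetaEval_congr _ _ _ (hcons1 m' v)
  have hfun2 : (fun (m' : Phase (d + 1) k) (v : Fin d → Phase (d + 1) k) =>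
        H m' * volEval (d + 1) k (Fin.cons (ξP m') v))
      = (fun m' v => H m' * volEval (d + 1) k (Fin.cons (qVF (d + 1) k ξf m') v)) := by
    funext m' v
    rw [volEval_congr _ _ (hcons1 m' v)]
  rw [hfun1, hfun2, hdef m w, dTheta (d + 1) k m (Fin.cons (ξP m) w)]
  ring
end
end

section
/- (Noether's theorem in the pataplectic setting.) Let ξ be a vector field on ℝ^{n+k} which is an infinitesimal symmetry of the variational problem, i.e. L_{Ξ(P_ξ)}(θ − Hω) = 0. Then along the graph Γ of any solution x ↦ (q(x),p(x)) of the generalized Hamilton equations, the (n−1)-form P*_ξ := ξ ⨼ (θ − Hω) is closed: d( ξ ⨼ (θ − Hω) )|_Γ = 0. -/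
open scoped BigOperators

noncomputable section

namespace Stmt17Aux

variable {n k : ℕ}

/-- coordinate vector of a tangent vector in the `s`-summand of `Ω`. -/
def cvec (s : MultiIdx (n + k) n) (V : Phase n k) : Fin (n + 1) → ℝ :=
  Fin.cons (V.2 s) (fun j => V.1 (midx s j))

lemma OmegaEval_cvec (W : Fin (n + 1) → Phase n k) :
    OmegaEval n k W = ∑ s : MultiIdx (n + k) n,
      Matrix.det (Matrix.of fun a b : Fin (n + 1) => cvec s (W b) a) := rfl

lemma cvec_sum (s : MultiIdx (n + k) n) (c : Fin n → ℝ) (E : Fin n → Phase n k) (a : Fin (n+1)) :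
    cvec s (∑ α, c α • E α) a = ∑ α, c α * cvec s (E α) a := by
  refine Fin.cases ?_ ?_ a
  · simp [cvec, Prod.snd_sum, Finset.sum_apply]
  · intro j
    simp [cvec, Prod.fst_sum, Finset.sum_apply]

/-- Laplace expansion of `Ω` along the `p`-row. -/
lemma OmegaEval_expand (W : Fin (n + 1) → Phase n k) :
    OmegaEval n k W
      = ∑ i : Fin (n + 1), (-1 : ℝ) ^ (i : ℕ) * thetaEval n k (W i) (W ∘ i.succAbove) := by
  rw [OmegaEval_cvec]
  have h : ∀ s : MultiIdx (n + k) n,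
      Matrix.det (Matrix.of fun a b : Fin (n + 1) => cvec s (W b) a)
        = ∑ i : Fin (n + 1), (-1 : ℝ) ^ (i : ℕ) *
            ((W i).2 s * Matrix.det
              (Matrix.of fun a b : Fin n => ((W ∘ i.succAbove) b).1 (midx s a))) := by
    intro s
    rw [Matrix.det_succ_row_zero]
    refine Finset.sum_congr rfl fun i _ => ?_
    have h1 : (Matrix.of fun a b : Fin (n+1) => cvec s (W b) a) 0 i = (W i).2 s := by
      simp [cvec]
    have h2 : ((Matrix.of fun a b : Fin (n+1) => cvec s (W b) a).submatrix Fin.succ i.succAbove)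
        = Matrix.of fun a b : Fin n => ((W ∘ i.succAbove) b).1 (midx s a) := by
      ext a b
      simp [cvec, Function.comp]
    rw [h1, h2, mul_assoc]
  simp only [h]
  rw [Finset.sum_comm]
  refine Finset.sum_congr rfl fun i _ => ?_
  rw [thetaEval, Finset.mul_sum]

/-- the `dx^β ∧ ω` contraction sum vanishes (determinant with a repeated row). -/
lemma sum_row_zero (W : Fin (n + 1) → Phase n k) (β : Fin n) :
    ∑ i : Fin (n + 1), (-1 : ℝ) ^ (i : ℕ) *
      ((W i).1 (Fin.castAdd k β) * volEval n k (W ∘ i.succAbove)) = 0 := by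
  set A : Matrix (Fin (n+1)) (Fin (n+1)) ℝ := Matrix.of fun a b : Fin (n + 1) =>
    (Fin.cons ((W b).1 (Fin.castAdd k β))
      (fun a' : Fin n => (W b).1 (Fin.castAdd k a')) : Fin (n+1) → ℝ) a with hA
  have h0 : A.det = 0 := by
    refine Matrix.det_zero_of_row_eq (i := 0) (j := Fin.succ β) (Fin.succ_ne_zero β).symm ?_
    funext b
    simp [hA]
  have h := Matrix.det_succ_row_zero A
  rw [h0] at h
  calc ∑ i : Fin (n + 1), (-1 : ℝ) ^ (i : ℕ) *
      ((W i).1 (Fin.castAdd k β) * volEval n k (W ∘ i.succAbove))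
      = ∑ i : Fin (n+1), (-1:ℝ) ^ (i:ℕ) * A 0 i * (A.submatrix Fin.succ i.succAbove).det := by
        refine Finset.sum_congr rfl fun i _ => ?_
        have h1 : A 0 i = (W i).1 (Fin.castAdd k β) := by simp [hA]
        have h2 : A.submatrix Fin.succ i.succAbove
            = Matrix.of fun a b : Fin n => ((W ∘ i.succAbove) b).1 (Fin.castAdd k a) := by
          ext a b
          simp [hA, Function.comp]
        rw [h1, h2, mul_assoc, volEval]
    _ = 0 := h.symm

/-- `Ω(e₁,…,eₙ,w) = 0` when `w` is a linear combination of `e₁,…,eₙ`. -/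
lemma omega_snoc_zero (E : Fin n → Phase n k) (c : Fin n → ℝ) :
    OmegaEval n k (Fin.snoc E (∑ α, c α • E α)) = 0 := by
  set D : Matrix (Fin (n+1)) (Fin (n+1)) ℝ := Matrix.of fun r =>
    Fin.lastCases (0 : Fin (n+1) → ℝ)
      (fun α => Fin.snoc (fun α' : Fin n => if α' = α then (1:ℝ) else 0) (c α)) r with hD
  have hDdet : D.det = 0 := by
    refine Matrix.det_eq_zero_of_row_eq_zero (Fin.last n) fun j => ?_
    simp [hD]
  rw [OmegaEval_cvec]
  refine Finset.sum_eq_zero fun s _ => ?_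
  have hM : (Matrix.of fun a b : Fin (n+1) =>
        cvec s ((Fin.snoc E (∑ α, c α • E α) : Fin (n+1) → Phase n k) b) a)
      = (Matrix.of fun a b : Fin (n+1) =>
          cvec s ((Fin.snoc E (0 : Phase n k) : Fin (n+1) → Phase n k) b) a) * D := by
    ext a b
    rw [Matrix.mul_apply, Fin.sum_univ_castSucc]
    refine Fin.lastCases ?_ ?_ b
    · simp only [Matrix.of_apply, Fin.snoc_last, Fin.snoc_castSucc, hD,
        Fin.lastCases_last, Fin.lastCases_castSucc, Pi.zero_apply, mul_zero, add_zero]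
      rw [cvec_sum]
      exact Finset.sum_congr rfl fun α _ => by rw [mul_comm]
    · intro β
      simp only [Matrix.of_apply, Fin.snoc_castSucc, hD,
        Fin.lastCases_last, Fin.lastCases_castSucc, Pi.zero_apply, mul_zero, add_zero]
      rw [Finset.sum_eq_single β]
      · simp
      · intro α _ hα
        simp [Ne.symm hα]
      · simp
  rw [hM, Matrix.det_mul, hDdet, mul_zero]

/-- multilinearity of `Ω`: pulling the coefficient matrix out of the last `n` slots. -/
lemma omega_cons (ξ : Phase n k) (E : Fin n → Phase n k) (V : Fin n → Fin n → ℝ)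
    (w : Fin n → Phase n k) (hw : ∀ j, w j = ∑ α, V j α • E α) :
    OmegaEval n k (Fin.cons ξ w)
      = OmegaEval n k (Fin.snoc E ξ)
          * ((-1 : ℝ) ^ n * Matrix.det (Matrix.of fun a b : Fin n => V b a)) := by
  set C : Matrix (Fin (n+1)) (Fin (n+1)) ℝ := Matrix.of fun r =>
    Fin.lastCases (Fin.cons (1:ℝ) (0 : Fin n → ℝ))
      (fun α => Fin.cons (0:ℝ) (fun j : Fin n => V j α)) r with hC
  have hCdet : C.det = (-1 : ℝ) ^ n * Matrix.det (Matrix.of fun a b : Fin n => V b a) := by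
    rw [Matrix.det_succ_column_zero]
    rw [Finset.sum_eq_single (Fin.last n)]
    · have h1 : C (Fin.last n) 0 = 1 := by simp [hC]
      have h2 : C.submatrix (Fin.last n).succAbove Fin.succ
          = Matrix.of fun a b : Fin n => V b a := by
        ext a b
        simp [hC, Fin.succAbove_last]
      rw [h1, h2, Fin.val_last, mul_one]
    · intro i _ hi
      obtain ⟨α, rfl⟩ := Fin.exists_castSucc_eq.mpr hi
      have : C (Fin.castSucc α) 0 = 0 := by simp [hC]
      rw [this, mul_zero, zero_mul]
    · simp
  rw [OmegaEval_cvec, OmegaEval_cvec, Finset.sum_mul]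
  refine Finset.sum_congr rfl fun s _ => ?_
  have hM : (Matrix.of fun a b : Fin (n+1) =>
        cvec s ((Fin.cons ξ w : Fin (n+1) → Phase n k) b) a)
      = (Matrix.of fun a b : Fin (n+1) =>
          cvec s ((Fin.snoc E ξ : Fin (n+1) → Phase n k) b) a) * C := by
    ext a b
    rw [Matrix.mul_apply, Fin.sum_univ_castSucc]
    refine Fin.cases ?_ ?_ b
    · simp [hC, Fin.snoc_last, Fin.snoc_castSucc]
    · intro j
      simp only [Matrix.of_apply, Fin.cons_succ, hC,
        Fin.lastCases_last, Fin.lastCases_castSucc, Fin.snoc_last, Fin.snoc_castSucc,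
        Fin.cons_zero, Matrix.of_apply, Fin.cons_succ, Pi.zero_apply, mul_zero, add_zero]
      rw [hw j, cvec_sum]
      exact Finset.sum_congr rfl fun α _ => by rw [mul_comm]
  rw [hM, Matrix.det_mul, hCdet]

lemma theta_hasFDerivAt (Wf : Fin n → Phase n k) (m : Phase n k) :
    HasFDerivAt (fun m' : Phase n k => thetaEval n k m' Wf)
      (∑ s : MultiIdx (n + k) n,
        Matrix.det (Matrix.of fun a b : Fin n => (Wf b).1 (midx s a)) •
          ((ContinuousLinearMap.proj s).comp
            (ContinuousLinearMap.snd ℝ (Fin (n + k) → ℝ) (MultiIdx (n + k) n → ℝ)))) m := by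
  unfold thetaEval
  refine HasFDerivAt.fun_sum fun s _ => ?_
  exact (((ContinuousLinearMap.proj s).comp
    (ContinuousLinearMap.snd ℝ (Fin (n + k) → ℝ) (MultiIdx (n + k) n → ℝ))).hasFDerivAt).mul_const _

lemma theta_fderiv_apply (Wf : Fin n → Phase n k) (m V : Phase n k) :
    fderiv ℝ (fun m' : Phase n k => thetaEval n k m' Wf) m V = thetaEval n k V Wf := by
  rw [(theta_hasFDerivAt Wf m).fderiv]
  simp [thetaEval, ContinuousLinearMap.sum_apply, mul_comm]

lemma thetaEval_congr_fst (m : Phase n k) {w₁ w₂ : Fin n → Phase n k}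
    (h : ∀ b, (w₁ b).1 = (w₂ b).1) : thetaEval n k m w₁ = thetaEval n k m w₂ := by
  unfold thetaEval
  refine Finset.sum_congr rfl fun s _ => ?_
  have hM : (Matrix.of fun a b : Fin n => (w₁ b).1 (midx s a))
      = Matrix.of fun a b : Fin n => (w₂ b).1 (midx s a) := by
    ext a b
    rw [Matrix.of_apply, Matrix.of_apply, h b]
  rw [hM]

lemma volEval_congr_fst {w₁ w₂ : Fin n → Phase n k}
    (h : ∀ b, (w₁ b).1 = (w₂ b).1) : volEval n k w₁ = volEval n k w₂ := by
  unfold volEval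
  have hM : (Matrix.of fun a b : Fin n => (w₁ b).1 (Fin.castAdd k a))
      = Matrix.of fun a b : Fin n => (w₂ b).1 (Fin.castAdd k a) := by
    ext a b
    rw [Matrix.of_apply, Matrix.of_apply, h b]
  rw [hM]

end Stmt17Aux

/-- **Noether's theorem in the pataplectic setting.**
Let `ξ` be a vector field on `ℝ^{n+k}` which is an infinitesimal symmetry of the variational
problem, i.e. `L_{Ξ(P_ξ)}(θ − Hω) = 0` (Lie derivative by Cartan's formula, where `Ξ(P_ξ)`
is the pataplectic vector field of `P_ξ = ξ⨼θ`).  Then along the graph `Γ` of any solution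
`x ↦ (q(x),p(x))` of the generalized Hamilton equations
(`(−1)ⁿ (∂(q,p)/∂x¹ ∧ … ∧ ∂(q,p)/∂xⁿ) ⨼ Ω = dH mod ℐ`), the `(n−1)`-form
`P*_ξ = ξ ⨼ (θ − Hω)` is closed: `d(ξ ⨼ (θ − Hω))|_Γ = 0`.  Here `n = d+1 ≥ 1`. -/
theorem stmt17 (d k : ℕ)
    (H : Phase (d + 1) k → ℝ) (hH : ContDiff ℝ (⊤ : ℕ∞) H)
    (ξf : Fin (d + 1 + k) → (Fin (d + 1 + k) → ℝ) → ℝ)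
    (hξf : ∀ μ, ContDiff ℝ (⊤ : ℕ∞) (ξf μ))
    (ξP : Phase (d + 1) k → Phase (d + 1) k) (hξP : ContDiff ℝ (⊤ : ℕ∞) ξP)
    (hqpart : ∀ m : Phase (d + 1) k, (ξP m).1 = fun μ => ξf μ m.1)
    (hdef : ∀ (m : Phase (d + 1) k) (w : Fin (d + 1) → Phase (d + 1) k),
      dEval (fun m' (v : Fin d → Phase (d + 1) k) =>
          thetaEval (d + 1) k m' (Fin.cons (qVF (d + 1) k ξf m') v)) m w
        = - OmegaEval (d + 1) k (Fin.cons (ξP m) w))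
    -- ξ is an infinitesimal symmetry: L_{Ξ(P_ξ)}(θ − Hω) = 0
    (hsym : ∀ (m : Phase (d + 1) k) (w : Fin (d + 1) → Phase (d + 1) k),
      dEval (fun m' (v : Fin (d + 1) → Phase (d + 1) k) =>
          thetaEval (d + 1) k m' v - H m' * volEval (d + 1) k v) m (Fin.cons (ξP m) w)
        + dEval (fun m' (v : Fin d → Phase (d + 1) k) =>
            thetaEval (d + 1) k m' (Fin.cons (ξP m') v)
              - H m' * volEval (d + 1) k (Fin.cons (ξP m') v)) m w
      = 0)
    -- a solution x ↦ (q(x),p(x)) = U(x) of the generalized Hamilton equations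
    (u : (Fin (d + 1) → ℝ) → (Fin k → ℝ)) (hu : ContDiff ℝ (⊤ : ℕ∞) u)
    (p : (Fin (d + 1) → ℝ) → (MultiIdx (d + 1 + k) (d + 1) → ℝ)) (hp : ContDiff ℝ (⊤ : ℕ∞) p)
    (U : (Fin (d + 1) → ℝ) → Phase (d + 1) k)
    (hU : ∀ x, U x = (Fin.append x (u x), p x))
    (hHam : ∀ x : Fin (d + 1) → ℝ, ∃ c : Fin (d + 1) → ℝ, ∀ V : Phase (d + 1) k,
      (-1 : ℝ) ^ (d + 1) *
          OmegaEval (d + 1) k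
            (Fin.snoc (fun α : Fin (d + 1) => fderiv ℝ U x (Pi.single α 1)) V)
        = fderiv ℝ H (U x) V + ∑ β : Fin (d + 1), c β * V.1 (Fin.castAdd k β)) :
    -- conclusion: d(ξ ⨼ (θ − Hω))|_Γ = 0
    ∀ (x : Fin (d + 1) → ℝ) (v : Fin (d + 1) → (Fin (d + 1) → ℝ)),
      dEval (fun m' (w : Fin d → Phase (d + 1) k) =>
          thetaEval (d + 1) k m' (Fin.cons (qVF (d + 1) k ξf m') w)
            - H m' * volEval (d + 1) k (Fin.cons (qVF (d + 1) k ξf m') w))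
        (U x) (fun j => fderiv ℝ U x (v j))
      = 0 := by
  intro x v
  obtain ⟨c, hc⟩ := hHam x
  -- differentiability of the solution map
  have hUdiff : Differentiable ℝ U := by
    have hUeq : U = fun y => (Fin.append y (u y), p y) := funext hU
    rw [hUeq]
    have h1 : Differentiable ℝ (fun y : Fin (d + 1) → ℝ => Fin.append y (u y)) := by
      have hμ : ∀ μ : Fin (d + 1 + k),
          Differentiable ℝ fun y : Fin (d + 1) → ℝ => Fin.append y (u y) μ := by
        intro μ
        refine Fin.addCases (motive := fun μ =>
          Differentiable ℝ fun y : Fin (d + 1) → ℝ => Fin.append y (u y) μ)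
          (fun a => ?_) (fun a => ?_) μ
        · simp only [Fin.append_left]
          exact differentiable_apply (𝕜 := ℝ) a
        · simp only [Fin.append_right]
          exact differentiable_pi.mp (hu.differentiable (by simp)) a
      exact differentiable_pi.mpr hμ
    exact h1.prodMk (hp.differentiable (by simp))
  -- the x-components of pushforward vectors
  have hcoord : ∀ (z : Fin (d + 1) → ℝ) (a : Fin (d + 1)),
      (fderiv ℝ U x z).1 (Fin.castAdd k a) = z a := by
    intro z a
    set L : Phase (d + 1) k →L[ℝ] ℝ :=
      (ContinuousLinearMap.proj (Fin.castAdd k a)).comp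
        (ContinuousLinearMap.fst ℝ (Fin (d + 1 + k) → ℝ) (MultiIdx (d + 1 + k) (d + 1) → ℝ))
      with hL
    have h1 : fderiv ℝ (fun y => L (U y)) x = L.comp (fderiv ℝ U x) :=
      (L.hasFDerivAt.comp x (hUdiff x).hasFDerivAt).fderiv
    have h2 : (fun y => L (U y)) = fun y : Fin (d + 1) → ℝ => y a := by
      funext y
      show (U y).1 (Fin.castAdd k a) = y a
      rw [hU]
      exact Fin.append_left _ _ a
    have h3 : fderiv ℝ (fun y : Fin (d + 1) → ℝ => y a) x
        = (ContinuousLinearMap.proj a : ((Fin (d + 1)) → ℝ) →L[ℝ] ℝ) :=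
      (ContinuousLinearMap.proj a : ((Fin (d + 1)) → ℝ) →L[ℝ] ℝ).hasFDerivAt.fderiv
    calc (fderiv ℝ U x z).1 (Fin.castAdd k a)
        = (L.comp (fderiv ℝ U x)) z := rfl
      _ = fderiv ℝ (fun y => L (U y)) x z := by rw [h1]
      _ = fderiv ℝ (fun y : Fin (d + 1) → ℝ => y a) x z := by rw [h2]
      _ = z a := by rw [h3]; rfl
  set wt : Fin (d + 1) → Phase (d + 1) k := fun j => fderiv ℝ U x (v j) with hwt
  set E : Fin (d + 1) → Phase (d + 1) k := fun α => fderiv ℝ U x (Pi.single α 1) with hE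
  -- decomposition of the pushed-forward vectors in terms of the coordinate frame
  have hw : ∀ j, wt j = ∑ α, v j α • E α := by
    intro j
    have hvz : v j = ∑ α, v j α • (Pi.single α (1 : ℝ) : Fin (d + 1) → ℝ) := by
      funext b
      simp [Finset.sum_apply, Pi.single_apply]
    have h4 : fderiv ℝ U x (∑ α, v j α • (Pi.single α (1 : ℝ) : Fin (d + 1) → ℝ))
        = ∑ α, v j α • fderiv ℝ U x (Pi.single α 1) := by
      rw [map_sum]
      exact Finset.sum_congr rfl fun α _ => (fderiv ℝ U x).map_smul _ _
    rw [← hvz] at h4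
    exact h4
  -- replace `qVF` by `ξP` using `hqpart`
  have hfst : ∀ m' : Phase (d + 1) k, (qVF (d + 1) k ξf m').1 = (ξP m').1 := by
    intro m'
    rw [hqpart]
    rfl
  have hfun : (fun m' (w : Fin d → Phase (d + 1) k) =>
      thetaEval (d + 1) k m' (Fin.cons (qVF (d + 1) k ξf m') w)
        - H m' * volEval (d + 1) k (Fin.cons (qVF (d + 1) k ξf m') w))
      = fun m' (w : Fin d → Phase (d + 1) k) =>
          thetaEval (d + 1) k m' (Fin.cons (ξP m') w)
            - H m' * volEval (d + 1) k (Fin.cons (ξP m') w) := by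
    funext m' w
    have hb : ∀ b : Fin (d + 1),
        ((Fin.cons (qVF (d + 1) k ξf m') w : Fin (d + 1) → Phase (d + 1) k) b).1
          = ((Fin.cons (ξP m') w : Fin (d + 1) → Phase (d + 1) k) b).1 := by
      intro b
      refine Fin.cases ?_ ?_ b
      · simpa using hfst m'
      · intro j
        simp
    rw [Stmt17Aux.thetaEval_congr_fst _ hb, Stmt17Aux.volEval_congr_fst hb]
  rw [hfun]
  have hs := hsym (U x) wt
  -- it remains to show that `(ξ ⨼ d(θ − Hω))|_Γ = 0`
  set W : Fin (d + 1 + 1) → Phase (d + 1) k := Fin.cons (ξP (U x)) wt with hW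
  have hA : dEval (fun m' (v : Fin (d + 1) → Phase (d + 1) k) =>
      thetaEval (d + 1) k m' v - H m' * volEval (d + 1) k v) (U x) W = 0 := by
    have hterm : ∀ i : Fin (d + 1 + 1),
        fderiv ℝ (fun m' => thetaEval (d + 1) k m' (W ∘ i.succAbove)
            - H m' * volEval (d + 1) k (W ∘ i.succAbove)) (U x) (W i)
          = thetaEval (d + 1) k (W i) (W ∘ i.succAbove)
            - fderiv ℝ H (U x) (W i) * volEval (d + 1) k (W ∘ i.succAbove) := by
      intro i
      have h1 := Stmt17Aux.theta_hasFDerivAt (n := d + 1) (k := k) (W ∘ i.succAbove) (U x)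
      have h2 : HasFDerivAt (fun m' : Phase (d + 1) k =>
            H m' * volEval (d + 1) k (W ∘ i.succAbove))
          (volEval (d + 1) k (W ∘ i.succAbove) • fderiv ℝ H (U x)) (U x) :=
        ((hH.differentiable (by simp)) (U x)).hasFDerivAt.mul_const _
      rw [fderiv_fun_sub h1.differentiableAt h2.differentiableAt, ContinuousLinearMap.sub_apply,
        Stmt17Aux.theta_fderiv_apply, h2.fderiv, ContinuousLinearMap.smul_apply, smul_eq_mul]
      ring
    simp only [dEval]
    have hHam' : ∀ V : Phase (d + 1) k, fderiv ℝ H (U x) V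
        = (-1 : ℝ) ^ (d + 1) * OmegaEval (d + 1) k (Fin.snoc E V)
          - ∑ β, c β * V.1 (Fin.castAdd k β) := by
      intro V
      have := hc V
      linarith
    have hzero : ∑ i : Fin (d + 1 + 1), (-1 : ℝ) ^ (i : ℕ) *
          (∑ β, c β * (W i).1 (Fin.castAdd k β)) * volEval (d + 1) k (W ∘ i.succAbove)
        = 0 := by
      have hper : ∀ i : Fin (d + 1 + 1), (-1 : ℝ) ^ (i : ℕ) *
            (∑ β, c β * (W i).1 (Fin.castAdd k β)) * volEval (d + 1) k (W ∘ i.succAbove)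
          = ∑ β, c β * ((-1 : ℝ) ^ (i : ℕ) *
              ((W i).1 (Fin.castAdd k β) * volEval (d + 1) k (W ∘ i.succAbove))) := by
        intro i
        rw [Finset.mul_sum, Finset.sum_mul]
        exact Finset.sum_congr rfl fun β _ => by ring
      calc ∑ i : Fin (d + 1 + 1), (-1 : ℝ) ^ (i : ℕ) *
            (∑ β, c β * (W i).1 (Fin.castAdd k β)) * volEval (d + 1) k (W ∘ i.succAbove)
          = ∑ i : Fin (d + 1 + 1), ∑ β, c β * ((-1 : ℝ) ^ (i : ℕ) *
              ((W i).1 (Fin.castAdd k β) * volEval (d + 1) k (W ∘ i.succAbove))) :=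
            Finset.sum_congr rfl fun i _ => hper i
        _ = ∑ β, ∑ i : Fin (d + 1 + 1), c β * ((-1 : ℝ) ^ (i : ℕ) *
              ((W i).1 (Fin.castAdd k β) * volEval (d + 1) k (W ∘ i.succAbove))) :=
            Finset.sum_comm
        _ = 0 := by
            refine Finset.sum_eq_zero fun β _ => ?_
            rw [← Finset.mul_sum, Stmt17Aux.sum_row_zero W β, mul_zero]
    have hWc : (Fin.cons (ξP (U x)) wt : Fin (d + 1 + 1) → Phase (d + 1) k) ∘ Fin.succ
        = wt := by
      funext j
      simp [Function.comp]
    have hWs : ∀ j : Fin (d + 1), OmegaEval (d + 1) k (Fin.snoc E (wt j)) = 0 := by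
      intro j
      rw [hw j]
      exact Stmt17Aux.omega_snoc_zero E (fun α => v j α)
    have hvol : volEval (d + 1) k wt
        = Matrix.det (Matrix.of fun a b : Fin (d + 1) => v b a) := by
      rw [volEval]
      have hM : (Matrix.of fun a b : Fin (d + 1) => (wt b).1 (Fin.castAdd k a))
          = Matrix.of fun a b : Fin (d + 1) => v b a := by
        ext a b
        exact hcoord (v b) a
      rw [hM]
    have hX : OmegaEval (d + 1) k W
        = OmegaEval (d + 1) k (Fin.snoc E (ξP (U x)))
            * ((-1 : ℝ) ^ (d + 1) * Matrix.det (Matrix.of fun a b : Fin (d + 1) => v b a)) := by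
      rw [hW]
      exact Stmt17Aux.omega_cons (ξP (U x)) E v wt hw
    calc ∑ i : Fin (d + 1 + 1), (-1 : ℝ) ^ (i : ℕ) *
          fderiv ℝ (fun m' => thetaEval (d + 1) k m' (W ∘ i.succAbove)
            - H m' * volEval (d + 1) k (W ∘ i.succAbove)) (U x) (W i)
        = ∑ i : Fin (d + 1 + 1),
            ((-1 : ℝ) ^ (i : ℕ) * thetaEval (d + 1) k (W i) (W ∘ i.succAbove)
              - (-1 : ℝ) ^ (i : ℕ) *
                  (fderiv ℝ H (U x) (W i) * volEval (d + 1) k (W ∘ i.succAbove))) :=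
          Finset.sum_congr rfl fun i _ => by rw [hterm i]; ring
      _ = (∑ i : Fin (d + 1 + 1),
              (-1 : ℝ) ^ (i : ℕ) * thetaEval (d + 1) k (W i) (W ∘ i.succAbove))
          - ∑ i : Fin (d + 1 + 1), (-1 : ℝ) ^ (i : ℕ) *
              (fderiv ℝ H (U x) (W i) * volEval (d + 1) k (W ∘ i.succAbove)) :=
          Finset.sum_sub_distrib _ _
      _ = OmegaEval (d + 1) k W
          - ∑ i : Fin (d + 1 + 1), (-1 : ℝ) ^ (i : ℕ) *
              (fderiv ℝ H (U x) (W i) * volEval (d + 1) k (W ∘ i.succAbove)) := by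
          rw [← Stmt17Aux.OmegaEval_expand]
      _ = OmegaEval (d + 1) k W
          - ∑ i : Fin (d + 1 + 1),
              ((-1 : ℝ) ^ (i : ℕ) * ((-1 : ℝ) ^ (d + 1)
                  * OmegaEval (d + 1) k (Fin.snoc E (W i))
                  * volEval (d + 1) k (W ∘ i.succAbove))
                - (-1 : ℝ) ^ (i : ℕ) * (∑ β, c β * (W i).1 (Fin.castAdd k β))
                    * volEval (d + 1) k (W ∘ i.succAbove)) := by
          congr 1
          refine Finset.sum_congr rfl fun i _ => ?_
          rw [hHam' (W i)]
          ring
      _ = OmegaEval (d + 1) k W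
          - ((∑ i : Fin (d + 1 + 1), (-1 : ℝ) ^ (i : ℕ) * ((-1 : ℝ) ^ (d + 1)
                  * OmegaEval (d + 1) k (Fin.snoc E (W i))
                  * volEval (d + 1) k (W ∘ i.succAbove)))
              - ∑ i : Fin (d + 1 + 1), (-1 : ℝ) ^ (i : ℕ) *
                  (∑ β, c β * (W i).1 (Fin.castAdd k β))
                    * volEval (d + 1) k (W ∘ i.succAbove)) := by
          rw [Finset.sum_sub_distrib]
      _ = OmegaEval (d + 1) k W
          - ∑ i : Fin (d + 1 + 1), (-1 : ℝ) ^ (i : ℕ) * ((-1 : ℝ) ^ (d + 1)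
                  * OmegaEval (d + 1) k (Fin.snoc E (W i))
                  * volEval (d + 1) k (W ∘ i.succAbove)) := by
          rw [hzero, sub_zero]
      _ = OmegaEval (d + 1) k W
          - (-1 : ℝ) ^ (d + 1) * OmegaEval (d + 1) k (Fin.snoc E (ξP (U x)))
              * volEval (d + 1) k wt := by
          rw [Fin.sum_univ_succ, hW]
          simp [hWs, hWc]
      _ = 0 := by
          rw [hX, hvol]
          ring
  rw [hW] at hA
  linarith [hs, hA]
end
end
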